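/- arXiv:1111.3869 — 12 statements merged into one kernel-verified Lean document; each statement's English description precedes it below -/
import Mathlib

section
/- Let φ and ψ be anisotropic quasilinear p-forms over F (i.e. φ(v) = 0 implies v = 0, and similarly for ψ). Then there exists an injective F-linear map f : V_ψ → V_φ with φ ∘ f = ψ if and only if D_F(ψ) ⊆ D_F(φ). -/
/-! An anisotropic quasilinear form is additive with trivial kernel, hence injective. So
`D(ψ) ⊆ D(φ)` yields a unique map `f = φ⁻¹ ∘ ψ`, which is linear because `φ` and `ψ` are additive
with the same homogeneity `c ↦ c ^ p`, and injective because `ψ = φ ∘ f` is. -/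

open Function

theorem injective_of_map_add_of_map_eq_zero {A B : Type*} [AddGroup A] [AddGroup B] {f : A → B}
    (hadd : ∀ a b, f (a + b) = f a + f b) (hzero : ∀ a, f a = 0 → a = 0) : Injective f :=
  (injective_iff_map_eq_zero (AddMonoidHom.mk' f hadd)).2 hzero

theorem exists_linearMap_comp_eq_of_range_subset {R M N : Type*} [Semiring R]
    [AddCommMonoid M] [Module R M] [AddCommMonoid N] [Module R N] (σ : R → R)
    {φ : N → R} {ψ : M → R} (hφ : Injective φ)
    (hφadd : ∀ v w, φ (v + w) = φ v + φ w) (hφsmul : ∀ (c : R) v, φ (c • v) = σ c * φ v)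
    (hψadd : ∀ u w, ψ (u + w) = ψ u + ψ w) (hψsmul : ∀ (c : R) u, ψ (c • u) = σ c * ψ u)
    (h : Set.range ψ ⊆ Set.range φ) : ∃ f : M →ₗ[R] N, ∀ u, φ (f u) = ψ u := by
  obtain ⟨g, hg⟩ := Set.range_subset_range_iff_exists_comp.1 h
  have hg' : ∀ u, φ (g u) = ψ u := fun u => (congrFun hg u).symm
  refine ⟨{ toFun := g, map_add' := fun u w => hφ ?_, map_smul' := fun c u => hφ ?_ }, hg'⟩
  · rw [hφadd, hg', hg', hg', hψadd]
  · rw [RingHom.id_apply, hφsmul, hg', hg', hψsmul]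

theorem subform_iff_value_sets_contained_general
    {F V U : Type*} [Field F]
    [AddCommGroup V] [Module F V]
    [AddCommGroup U] [Module F U]
    (p : ℕ)
    (φ : V → F)
    (hφsmul : ∀ (c : F) (v : V), φ (c • v) = c ^ p * φ v)
    (hφadd : ∀ v w : V, φ (v + w) = φ v + φ w)
    (hφan : ∀ v : V, φ v = 0 → v = 0)
    (ψ : U → F)
    (hψsmul : ∀ (c : F) (u : U), ψ (c • u) = c ^ p * ψ u)
    (hψadd : ∀ u w : U, ψ (u + w) = ψ u + ψ w)
    (hψan : ∀ u : U, ψ u = 0 → u = 0) :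
    (∃ f : U →ₗ[F] V, Function.Injective f ∧ ∀ u, φ (f u) = ψ u) ↔
      Set.range ψ ⊆ Set.range φ := by
  constructor
  · rintro ⟨f, -, hf⟩ _ ⟨u, rfl⟩
    exact ⟨f u, hf u⟩
  · intro h
    obtain ⟨f, hf⟩ := exists_linearMap_comp_eq_of_range_subset (· ^ p)
      (injective_of_map_add_of_map_eq_zero hφadd hφan) hφadd hφsmul hψadd hψsmul h
    have hψ : Injective (φ ∘ f) := by
      simpa only [comp_def, hf] using injective_of_map_add_of_map_eq_zero hψadd hψan
    exact ⟨f, hψ.of_comp, hf⟩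

/-- An anisotropic quasilinear p-form ψ embeds into an anisotropic quasilinear
p-form φ if and only if D_F(ψ) ⊆ D_F(φ). -/
theorem subform_iff_value_sets_contained
    {F V U : Type*} [Field F]
    [AddCommGroup V] [Module F V] [FiniteDimensional F V]
    [AddCommGroup U] [Module F U] [FiniteDimensional F U]
    (p : ℕ) (hp : 0 < p) [CharP F p]
    (φ : V → F)
    (hφsmul : ∀ (c : F) (v : V), φ (c • v) = c ^ p * φ v)
    (hφadd : ∀ v w : V, φ (v + w) = φ v + φ w)
    (hφan : ∀ v : V, φ v = 0 → v = 0)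
    (ψ : U → F)
    (hψsmul : ∀ (c : F) (u : U), ψ (c • u) = c ^ p * ψ u)
    (hψadd : ∀ u w : U, ψ (u + w) = ψ u + ψ w)
    (hψan : ∀ u : U, ψ u = 0 → u = 0) :
    (∃ f : U →ₗ[F] V, Function.Injective f ∧ ∀ u, φ (f u) = ψ u) ↔
      Set.range ψ ⊆ Set.range φ :=
  subform_iff_value_sets_contained_general p φ hφsmul hφadd hφan ψ hψsmul hψadd hψan
end

section
/- Let F be a field of characteristic p > 0 and let f = a_0 x_0^p + a_1 x_1^p + ... + a_n x_n^p ∈ F[x_0,...,x_n] with a_0 ≠ 0. Then f is reducible in F[x_0,...,x_n] if and only if a_i/a_0 ∈ F^p for all i ∈ {1,...,n}. -/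
set_option synthInstance.maxHeartbeats 1000000 in
set_option maxHeartbeats 1000000 in
open MvPolynomial in
/-- Key lemma: if `b k / b 0` is not a `p`-th power for some `k ≠ 0`, then the diagonal
polynomial `∑ C (b i) * X i ^ p` is irreducible. -/
theorem diagonal_poly_irreducible_aux
    {F : Type*} [Field F] (p n : ℕ) [hp : Fact p.Prime] [CharP F p]
    (b : Fin (n + 1) → F) (k : Fin (n + 1)) (hk0 : k ≠ 0)
    (hk : ∀ c : F, c ^ p ≠ b k / b 0) :
    Irreducible (∑ i : Fin (n + 1),
        MvPolynomial.C (b i) * MvPolynomial.X i ^ p : MvPolynomial (Fin (n + 1)) F) := by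
  have hb0 : b 0 ≠ 0 := by
    intro h
    exact hk 0 (by rw [h, div_zero, zero_pow hp.out.ne_zero])
  have hbk : b k ≠ 0 := by
    intro h
    exact hk 0 (by rw [h, zero_div, zero_pow hp.out.ne_zero])
  -- transfer along `finSuccEquiv`
  rw [← MulEquiv.irreducible_iff ((MvPolynomial.finSuccEquiv F n).toRingEquiv)]
  set S := MvPolynomial (Fin n) F
  set g : S := ∑ i : Fin n, C (b i.succ) * X i ^ p with hg
  set c : S := C (-(b 0)⁻¹) * g with hc
  have hφ : (MvPolynomial.finSuccEquiv F n).toRingEquiv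
        (∑ i : Fin (n + 1), C (b i) * X i ^ p : MvPolynomial (Fin (n + 1)) F)
      = Polynomial.C (C (b 0)) * (Polynomial.X ^ p - Polynomial.C c) := by
    have hCmap : ∀ t : F, MvPolynomial.finSuccEquiv F n (C t) = Polynomial.C (C t) := by
      intro t
      simp [MvPolynomial.finSuccEquiv_apply]
    show MvPolynomial.finSuccEquiv F n _ = _
    rw [map_sum, Fin.sum_univ_succ]
    simp only [map_mul, map_pow, hCmap, finSuccEquiv_X_zero, finSuccEquiv_X_succ]
    have h1 : ∑ i : Fin n, Polynomial.C (C (b i.succ)) * Polynomial.C (X i) ^ p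
        = Polynomial.C g := by
      rw [hg, map_sum]
      refine Finset.sum_congr rfl fun i _ => ?_
      rw [← Polynomial.C_pow, ← Polynomial.C_mul]
    rw [h1, hc, mul_sub, ← Polynomial.C_mul, ← mul_assoc, ← MvPolynomial.C_mul]
    rw [show b 0 * -(b 0)⁻¹ = -1 by rw [mul_neg, mul_inv_cancel₀ hb0]]
    rw [MvPolynomial.C_neg, MvPolynomial.C_1, neg_one_mul, map_neg, sub_neg_eq_add]
  rw [hφ]
  have hunit : IsUnit (Polynomial.C (C (b 0)) : Polynomial S) :=
    ((isUnit_iff_ne_zero.mpr hb0).map MvPolynomial.C).map Polynomial.C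
  refine Associated.irreducible (associated_unit_mul_left
    (Polynomial.X ^ p - Polynomial.C c) _ hunit).symm ?_
  -- Irreducible (X ^ p - C c)
  have hmonic : (Polynomial.X ^ p - Polynomial.C c).Monic :=
    Polynomial.monic_X_pow_sub_C c hp.out.ne_zero
  rw [hmonic.irreducible_iff_irreducible_map_fraction_map (K := FractionRing S)]
  rw [Polynomial.map_sub, Polynomial.map_pow, Polynomial.map_X, Polynomial.map_C]
  refine X_pow_sub_C_irreducible_of_prime hp.out fun q hq => ?_
  -- q is integral over S, hence comes from S
  have hint : IsIntegral S q := by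
    refine ⟨Polynomial.X ^ p - Polynomial.C c, hmonic, ?_⟩
    simp [Polynomial.eval₂_sub, hq]
  obtain ⟨r, hr⟩ := IsIntegrallyClosed.isIntegral_iff.mp hint
  have hrp : r ^ p = c := by
    apply IsFractionRing.injective S (FractionRing S)
    rw [map_pow, hr, hq]
  -- specialize: send X k' ↦ X, other variables ↦ 0
  set k' : Fin n := k.pred hk0 with hk'
  have hk'succ : k'.succ = k := Fin.succ_pred k hk0
  set π : S →ₐ[F] Polynomial F :=
    aeval (fun i : Fin n => if i = k' then (Polynomial.X : Polynomial F) else 0) with hπ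
  have hπc : π c = Polynomial.C (-(b 0)⁻¹ * b k) * Polynomial.X ^ p := by
    rw [hc, hg, map_mul, map_sum, aeval_C]
    have : ∀ i : Fin n, π (C (b i.succ) * X i ^ p)
        = if i = k' then Polynomial.C (b k) * Polynomial.X ^ p else 0 := by
      intro i
      rw [map_mul, map_pow, aeval_C, aeval_X]
      split_ifs with h
      · rw [h, hk'succ, Polynomial.algebraMap_eq]
      · rw [zero_pow hp.out.ne_zero, mul_zero]
    rw [Finset.sum_congr rfl fun i _ => this i, Finset.sum_ite_eq' Finset.univ k'
      (fun _ => Polynomial.C (b k) * Polynomial.X ^ p)]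
    simp only [Finset.mem_univ, if_true]
    rw [show (algebraMap F (Polynomial F)) (-(b 0)⁻¹) = Polynomial.C (-(b 0)⁻¹) from rfl,
      ← mul_assoc, ← Polynomial.C_mul]
  have hπr : (π r) ^ p = Polynomial.C (-(b 0)⁻¹ * b k) * Polynomial.X ^ p := by
    rw [← map_pow, hrp, hπc]
  have hlead : (π r).leadingCoeff ^ p = -(b 0)⁻¹ * b k := by
    rw [← Polynomial.leadingCoeff_pow, hπr, Polynomial.leadingCoeff_C_mul_X_pow]
  refine hk (-(π r).leadingCoeff) ?_
  rw [neg_pow, neg_one_pow_char F p, hlead]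
  field_simp

/-- The diagonal polynomial a_0 x_0^p + ... + a_n x_n^p with a_0 ≠ 0 is reducible
if and only if a_i / a_0 is a p-th power for all i ∈ {1,...,n}. -/
theorem diagonal_poly_reducible_iff
    {F : Type*} [Field F] (p n : ℕ) [Fact p.Prime] [CharP F p]
    (a : Fin (n + 1) → F) (ha : a 0 ≠ 0) :
    ¬ Irreducible (∑ i : Fin (n + 1),
        MvPolynomial.C (a i) * MvPolynomial.X i ^ p : MvPolynomial (Fin (n + 1)) F) ↔
      ∀ i : Fin (n + 1), i ≠ 0 → ∃ c : F, c ^ p = a i / a 0 := by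
  have hp : Fact p.Prime := inferInstance
  constructor
  · -- if not all a i / a 0 are p-th powers, the polynomial is irreducible
    contrapose!
    rintro ⟨j, hj0, hj⟩
    -- rename variables with the swap of 0 and j
    set e : Fin (n + 1) ≃ Fin (n + 1) := Equiv.swap 0 j with he
    rw [← MulEquiv.irreducible_iff ((MvPolynomial.renameEquiv F e).toRingEquiv)]
    have hrename : (MvPolynomial.renameEquiv F e).toRingEquiv
          (∑ i : Fin (n + 1), MvPolynomial.C (a i) * MvPolynomial.X i ^ p :
            MvPolynomial (Fin (n + 1)) F)
        = ∑ i : Fin (n + 1), MvPolynomial.C ((a ∘ e) i) * MvPolynomial.X i ^ p := by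
      show MvPolynomial.rename e _ = _
      rw [map_sum]
      refine Fintype.sum_equiv e _ _ fun i => ?_
      simp only [map_mul, map_pow, MvPolynomial.rename_C, MvPolynomial.rename_X,
        Function.comp_apply, he, Equiv.swap_apply_self]
    rw [hrename]
    refine diagonal_poly_irreducible_aux p n (a ∘ e) j hj0 fun c hc => ?_
    have hej : e j = 0 := Equiv.swap_apply_right 0 j
    have he0 : e 0 = j := Equiv.swap_apply_left 0 j
    rw [Function.comp_apply, Function.comp_apply, hej, he0] at hc
    -- hc : c ^ p = a 0 / a j
    have haj : a j ≠ 0 := by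
      intro h
      exact hj 0 (by rw [h, zero_div, zero_pow hp.out.ne_zero])
    have hc0 : c ≠ 0 := by
      intro h
      rw [h, zero_pow hp.out.ne_zero, eq_comm, div_eq_zero_iff] at hc
      exact hc.elim ha haj
    refine hj c⁻¹ ?_
    rw [inv_pow, hc, inv_div]
  · -- if all a i / a 0 are p-th powers, the polynomial is reducible
    intro h hirr
    set d : Fin (n + 1) → F := fun i => if h' : i = 0 then 1 else (h i h').choose with hd
    set L : MvPolynomial (Fin (n + 1)) F :=
      ∑ i : Fin (n + 1), MvPolynomial.C (d i) * MvPolynomial.X i with hL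
    have hfactor : (∑ i : Fin (n + 1),
          MvPolynomial.C (a i) * MvPolynomial.X i ^ p : MvPolynomial (Fin (n + 1)) F)
        = MvPolynomial.C (a 0) * L ^ p := by
      rw [hL, sum_pow_char, Finset.mul_sum]
      refine Finset.sum_congr rfl fun i _ => ?_
      rw [mul_pow, ← MvPolynomial.C_pow, ← mul_assoc, ← MvPolynomial.C_mul]
      congr 2
      by_cases h' : i = 0
      · subst h'
        simp [hd]
      · have := (h i h').choose_spec
        rw [hd]
        simp only [h', dif_neg, not_false_iff]
        rw [this, mul_comm, div_mul_cancel₀ _ ha]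
    rw [hfactor] at hirr
    have hunit : IsUnit (MvPolynomial.C (a 0) : MvPolynomial (Fin (n + 1)) F) :=
      (isUnit_iff_ne_zero.mpr ha).map MvPolynomial.C
    have hassoc : Associated (L ^ p)
        (MvPolynomial.C (a 0) * L ^ p : MvPolynomial (Fin (n + 1)) F) :=
      (associated_unit_mul_left _ _ hunit).symm
    exact not_irreducible_pow hp.out.ne_one (hassoc.symm.irreducible hirr)
end

section
/- Let F be a field of characteristic p > 0 and a_1, ..., a_n ∈ F. If a_1 x_1^p + a_2 x_2^p + ... + a_n x_n^p is a p-th power in the rational function field F(x_1,...,x_n), then a_i ∈ F^p for all i. -/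
set_option synthInstance.maxHeartbeats 1000000

/-- If a_1 x_1^p + ... + a_n x_n^p is a p-th power in F(x_1,...,x_n), then each
a_i is a p-th power in F. -/
theorem pth_power_in_function_field
    {F : Type*} [Field F] (p n : ℕ) [Fact p.Prime] [CharP F p]
    (a : Fin n → F)
    (h : ∃ g : FractionRing (MvPolynomial (Fin n) F),
      g ^ p = algebraMap (MvPolynomial (Fin n) F) (FractionRing (MvPolynomial (Fin n) F))
        (∑ i : Fin n, MvPolynomial.C (a i) * MvPolynomial.X i ^ p)) :
    ∀ i : Fin n, ∃ c : F, c ^ p = a i := by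
  obtain ⟨g, hg⟩ := h
  have hp : 0 < p := (Fact.out : p.Prime).pos
  have hint : IsIntegral (MvPolynomial (Fin n) F) (g ^ p) := by
    rw [hg]; exact isIntegral_algebraMap
  obtain ⟨q, hq⟩ := IsIntegrallyClosed.exists_algebraMap_eq_of_isIntegral_pow hp hint
  have hq2 : q ^ p = ∑ i : Fin n, MvPolynomial.C (a i) * MvPolynomial.X i ^ p := by
    apply IsFractionRing.injective (MvPolynomial (Fin n) F)
      (FractionRing (MvPolynomial (Fin n) F))
    rw [map_pow, hq, hg]
  intro i
  refine ⟨MvPolynomial.coeff (Finsupp.single i 1) q, ?_⟩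
  have hps : p • (Finsupp.single i 1) = Finsupp.single i p := by
    rw [Finsupp.smul_single]; norm_num
  have key : MvPolynomial.coeff (Finsupp.single i p) (q ^ p)
      = MvPolynomial.coeff (Finsupp.single i 1) q ^ p := by
    conv_lhs => rw [q.as_sum]
    rw [sum_pow_char]
    simp_rw [MvPolynomial.monomial_pow]
    rw [MvPolynomial.coeff_sum]
    simp_rw [MvPolynomial.coeff_monomial]
    rw [Finset.sum_eq_single (Finsupp.single i 1)]
    · rw [if_pos hps]
    · intro m hm hne
      rw [if_neg]
      intro hc
      apply hne
      have h2 : p • m = p • Finsupp.single i 1 := by rw [hc, hps]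
      ext j
      have := congrArg (fun f : Fin n →₀ ℕ => f j) h2
      simp only [Finsupp.smul_apply, smul_eq_mul] at this
      exact Nat.eq_of_mul_eq_mul_left hp this
    · intro hmem
      simp only [MvPolynomial.mem_support_iff, not_not] at hmem
      rw [if_pos hps, hmem, zero_pow hp.ne']
  rw [← key, hq2, MvPolynomial.coeff_sum]
  simp_rw [MvPolynomial.X_pow_eq_monomial, MvPolynomial.C_mul_monomial, mul_one,
    MvPolynomial.coeff_monomial]
  rw [Finset.sum_eq_single i]
  · rw [if_pos rfl]
  · intro j _ hne
    rw [if_neg]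
    intro hc
    exact hne (by simpa [Finsupp.single_left_inj hp.ne'] using hc)
  · simp
end

section
/- Let F be a field of characteristic p > 0 and let φ = ⟨1, a_1, ..., a_n⟩ be the quasilinear p-form (x_0,...,x_n) ↦ x_0^p + a_1 x_1^p + ... + a_n x_n^p on F^{n+1}. Then the norm field N_F(φ) := F^p(b/c : b, c ∈ D_F(φ), c ≠ 0) equals F^p(a_1, ..., a_n). -/
/-- The norm field of the form ⟨1, a_1, ..., a_n⟩ is F^p(a_1, ..., a_n). -/
theorem norm_field_of_form
    {F : Type*} [Field F] (p n : ℕ) [Fact p.Prime] [CharP F p]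
    (a : Fin n → F) :
    Subfield.closure ({y : F | ∃ c : F, c ^ p = y} ∪
        {r : F | ∃ u ∈ {y : F | ∃ (x0 : F) (x : Fin n → F), y = x0 ^ p + ∑ i, a i * x i ^ p},
                 ∃ v ∈ {y : F | ∃ (x0 : F) (x : Fin n → F), y = x0 ^ p + ∑ i, a i * x i ^ p},
                 v ≠ 0 ∧ r = u / v}) =
      Subfield.closure ({y : F | ∃ c : F, c ^ p = y} ∪ Set.range a) := by
  have hp : p ≠ 0 := (Fact.out (p := p.Prime)).ne_zero
  apply le_antisymm
  · rw [Subfield.closure_le]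
    have hval : ∀ (z0 : F) (z : Fin n → F),
        z0 ^ p + ∑ i, a i * z i ^ p ∈
          Subfield.closure ({y : F | ∃ c : F, c ^ p = y} ∪ Set.range a) := by
      intro z0 z
      refine add_mem (Subfield.subset_closure (Or.inl ⟨z0, rfl⟩)) (Subfield.sum_mem _ ?_)
      intro i _
      exact mul_mem (Subfield.subset_closure (Or.inr ⟨i, rfl⟩))
        (Subfield.subset_closure (Or.inl ⟨z i, rfl⟩))
    rintro y (hy | ⟨u, ⟨x0, x, rfl⟩, v, ⟨y0, yv, rfl⟩, hv, rfl⟩)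
    · exact Subfield.subset_closure (Or.inl hy)
    · exact div_mem (hval _ _) (hval _ _)
  · rw [Subfield.closure_le]
    rintro y (hy | ⟨i, rfl⟩)
    · exact Subfield.subset_closure (Or.inl hy)
    · apply Subfield.subset_closure
      right
      refine ⟨a i, ⟨0, fun j => if j = i then 1 else 0, ?_⟩, 1, ⟨1, 0, ?_⟩,
        one_ne_zero, (div_one _).symm⟩
      · simp [hp, Finset.sum_ite_eq', apply_ite (· ^ p)]
      · simp [hp]
end

section
/- Let F be a field of characteristic p > 0 and a_1, ..., a_n ∈ F*. The quasi-Pfister form ⟨⟨a_1,...,a_n⟩⟩, defined as the form sending (x_{j_1,...,j_n}) ∈ F^{p^n} to Σ_{0 ≤ j_1,...,j_n ≤ p-1} (Π_i a_i^{j_i}) x_{j_1,...,j_n}^p, is anisotropic over F if and only if [F^p(a_1,...,a_n) : F^p] = p^n. -/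
/-! Writing `K = F^p` for the image of Frobenius, the form is `x ↦ ∑ⱼ x_j^p • m_j` with
`K`-coefficients `x_j^p` ranging over all of `K`, where `m_j = ∏ aᵢ^{jᵢ}`; so it is anisotropic
iff the `p^n` monomials `m_j` are `K`-linearly independent, i.e. iff their span has dimension `p^n`.
That span is closed under multiplication, since `m_j m_k = (∏ aᵢ^{⌊(jᵢ+kᵢ)/p⌋})^p m_{j+k}`
with `j + k` taken mod `p`, so it is the algebra generated by the `aᵢ`, which is the field
`K(a₁,…,aₙ)` because every element of `F` is algebraic over `K`. -/

set_option synthInstance.maxHeartbeats 1000000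

/-- The quasi-Pfister form ⟨⟨a_1,...,a_n⟩⟩. -/
def pfisterForm (p : ℕ) {F : Type*} [Field F] {n : ℕ} (a : Fin n → F)
    (x : (Fin n → Fin p) → F) : F :=
  ∑ j : Fin n → Fin p, (∏ i, a i ^ (j i : ℕ)) * x j ^ p

def pfisterMonomial {M : Type*} [CommMonoid M] {n : ℕ} (p : ℕ) (a : Fin n → M)
    (j : Fin n → Fin p) : M :=
  ∏ i, a i ^ (j i : ℕ)

theorem pfisterMonomial_mul {M : Type*} [CommMonoid M] {n : ℕ} (p : ℕ) (a : Fin n → M)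
    (j k : Fin n → Fin p) :
    pfisterMonomial p a j * pfisterMonomial p a k =
      (∏ i, a i ^ ((j i + k i : ℕ) / p)) ^ p * pfisterMonomial p a (j + k) := by
  simp only [pfisterMonomial, ← Finset.prod_mul_distrib, ← Finset.prod_pow, ← pow_add, ← pow_mul,
    Pi.add_apply, Fin.val_add, Nat.div_add_mod']

theorem pfisterMonomial_zero {M : Type*} [CommMonoid M] {n : ℕ} (p : ℕ) [NeZero p]
    (a : Fin n → M) :
    pfisterMonomial p a (0 : Fin n → Fin p) = 1 := by
  simp [pfisterMonomial]

theorem pfisterMonomial_single {M : Type*} [CommMonoid M] {n : ℕ} (p : ℕ) [Fact (1 < p)]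
    (a : Fin n → M) (i : Fin n) : pfisterMonomial p a (Pi.single i 1 : Fin n → Fin p) = a i := by
  rw [pfisterMonomial, Finset.prod_eq_single i (fun k _ hk => by simp [hk]) (by simp)]
  simp [Nat.mod_eq_of_lt (Fact.out : 1 < p)]

section FrobeniusRange

variable {F : Type*} [Field F] (p : ℕ) [Fact p.Prime] [CharP F p] {n : ℕ}

theorem pfisterForm_eq_sum_smul (a : Fin n → F) (x : (Fin n → Fin p) → F) :
    pfisterForm p a x =
      ∑ j, (⟨x j ^ p, x j, rfl⟩ : (frobenius F p).fieldRange) • pfisterMonomial p a j := by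
  simp only [pfisterForm, pfisterMonomial, mul_comm]
  rfl

theorem pfisterForm_anisotropic_iff_linearIndependent (a : Fin n → F) :
    (∀ x, pfisterForm p a x = 0 → x = 0) ↔
      LinearIndependent (frobenius F p).fieldRange (pfisterMonomial p a) := by
  have hp : p ≠ 0 := (Fact.out : p.Prime).ne_zero
  rw [Fintype.linearIndependent_iff]
  constructor
  · intro h c hc j
    choose x hx using fun j => RingHom.mem_fieldRange.mp (c j).2
    have hcx : c = fun j => ⟨x j ^ p, x j, rfl⟩ := funext fun j => Subtype.ext (hx j).symm
    subst hcx
    have hx0 : x = 0 := h x (by rw [pfisterForm_eq_sum_smul, hc])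
    exact Subtype.ext (by simp [hx0, zero_pow hp])
  · intro h x hx
    funext j
    have hxj := congrArg Subtype.val (h _ ((pfisterForm_eq_sum_smul p a x).symm.trans hx) j)
    exact pow_eq_zero_iff hp |>.mp hxj

theorem span_pfisterMonomial_mul_le (a : Fin n → F) :
    Submodule.span (frobenius F p).fieldRange (Set.range (pfisterMonomial p a)) *
        Submodule.span (frobenius F p).fieldRange (Set.range (pfisterMonomial p a)) ≤
      Submodule.span (frobenius F p).fieldRange (Set.range (pfisterMonomial p a)) := by
  rw [Submodule.span_mul_span, Submodule.span_le]
  rintro _ ⟨_, ⟨j, rfl⟩, _, ⟨k, rfl⟩, rfl⟩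
  dsimp only
  rw [pfisterMonomial_mul]
  exact Submodule.smul_mem _ (⟨_, _, rfl⟩ : (frobenius F p).fieldRange)
    (Submodule.subset_span ⟨j + k, rfl⟩)

theorem isIntegral_frobenius_fieldRange (y : F) : IsIntegral (frobenius F p).fieldRange y :=
  IsIntegral.of_pow (Fact.out : p.Prime).pos
    (isIntegral_algebraMap (x := (⟨y ^ p, y, rfl⟩ : (frobenius F p).fieldRange)))

theorem span_pfisterMonomial_eq_adjoin (a : Fin n → F) :
    Submodule.span (frobenius F p).fieldRange (Set.range (pfisterMonomial p a)) =
      Subalgebra.toSubmodule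
        (IntermediateField.adjoin (frobenius F p).fieldRange (Set.range a)).toSubalgebra := by
  set S := Submodule.span (frobenius F p).fieldRange (Set.range (pfisterMonomial p a))
  have one_mem : (1 : F) ∈ S := pfisterMonomial_zero p a ▸ Submodule.subset_span ⟨0, rfl⟩
  have mul_mem (x y : F) (hx : x ∈ S) (hy : y ∈ S) : x * y ∈ S :=
    span_pfisterMonomial_mul_le p a (Submodule.mul_mem_mul hx hy)
  apply le_antisymm
  · rw [Submodule.span_le]
    rintro _ ⟨j, rfl⟩
    change pfisterMonomial p a j ∈ IntermediateField.adjoin _ (Set.range a)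
    exact prod_mem fun i _ =>
      pow_mem (IntermediateField.subset_adjoin _ _ (Set.mem_range_self i)) _
  · rw [IntermediateField.adjoin_toSubalgebra_of_isAlgebraic
      fun y _ => (isIntegral_frobenius_fieldRange p y).isAlgebraic]
    refine Algebra.adjoin_le (s := Set.range a) (S := S.toSubalgebra one_mem mul_mem) ?_
    rintro _ ⟨i, rfl⟩
    exact Submodule.subset_span ⟨_, pfisterMonomial_single p a i⟩

end FrobeniusRange

theorem pfister_anisotropic_iff_degree_general
    {F : Type*} [Field F] (p n : ℕ) [Fact p.Prime] [CharP F p]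
    (a : Fin n → F) :
    (∀ x, pfisterForm p a x = 0 → x = 0) ↔
      Module.finrank ((frobenius F p).fieldRange)
        (IntermediateField.adjoin (↥((frobenius F p).fieldRange)) (Set.range a)) = p ^ n := by
  rw [pfisterForm_anisotropic_iff_linearIndependent, linearIndependent_iff_card_eq_finrank_span,
    Set.finrank, span_pfisterMonomial_eq_adjoin, Fintype.card_fun, Fintype.card_fin,
    Fintype.card_fin, eq_comm]
  rfl

/-- The quasi-Pfister form ⟨⟨a_1,...,a_n⟩⟩ is anisotropic over F if and only if
[F^p(a_1,...,a_n) : F^p] = p^n. -/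
theorem pfister_anisotropic_iff_degree
    {F : Type*} [Field F] (p n : ℕ) [Fact p.Prime] [CharP F p]
    (a : Fin n → F) (ha : ∀ i, a i ≠ 0) :
    (∀ x, pfisterForm p a x = 0 → x = 0) ↔
      Module.finrank ((frobenius F p).fieldRange)
        (IntermediateField.adjoin (↥((frobenius F p).fieldRange)) (Set.range a)) = p ^ n :=
  pfister_anisotropic_iff_degree_general p n a
end

section
/- Let F be a field of characteristic p > 0 and a_1, ..., a_n ∈ F*. For any field extension L/F, the value set of the quasi-Pfister form ⟨⟨a_1,...,a_n⟩⟩ over L equals the subfield L^p(a_1,...,a_n) of L. -/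
/-!
In characteristic `p` the form is additive, so its values are the `L^p`-linear combinations
of the monomials `∏ bᵢ ^ jᵢ` with `jᵢ < p`. A product of two monomials is again a monomial times
a `p`-th power once the exponents are reduced modulo `p`, so the value set is a subring; it
contains `L^p` and the `bᵢ`, and a subring containing all `p`-th powers is a subfield because
`u⁻¹ = u ^ (p - 1) * u⁻¹ ^ p`. Conversely every value visibly lies in `L^p(b₁, …, bₙ)`.
-/

theorem Subring.inv_mem_of_forall_pow_mem {K : Type*} [Field K] (S : Subring K) {p : ℕ}
    (hp : p ≠ 0) (hpow : ∀ c : K, c ^ p ∈ S) {u : K} (hu : u ∈ S) : u⁻¹ ∈ S := by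
  rcases eq_or_ne u 0 with rfl | hu0
  · simp
  obtain ⟨m, rfl⟩ := Nat.exists_eq_succ_of_ne_zero hp
  have hinv : u ^ m * u⁻¹ ^ (m + 1) = u⁻¹ := by
    rw [pow_succ, ← mul_assoc, ← mul_pow, mul_inv_cancel₀ hu0, one_pow, one_mul]
  rw [← hinv]
  exact mul_mem (pow_mem hu m) (hpow u⁻¹)

section PfisterForm

variable {L : Type*} [Field L] (p : ℕ) {n : ℕ} (b : Fin n → L)

theorem pfisterForm_mem_of_forall_pow_mem {S : Type*} [SetLike S L] [SubringClass S L] (s : S)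
    (hpow : ∀ c : L, c ^ p ∈ s) (hb : ∀ i, b i ∈ s) (x : (Fin n → Fin p) → L) :
    pfisterForm p b x ∈ s :=
  sum_mem fun _ _ => mul_mem (prod_mem fun i _ => pow_mem (hb i) _) (hpow _)

variable [Fact p.Prime]

theorem prod_pow_mul_pow_mem_range_pfisterForm (e : Fin n → ℕ) (c : L) :
    (∏ i, b i ^ e i) * c ^ p ∈ Set.range (pfisterForm p b) := by
  classical
  have hp := (Fact.out : p.Prime)
  let r : Fin n → Fin p := fun i => ⟨e i % p, Nat.mod_lt _ hp.pos⟩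
  refine ⟨Pi.single r ((∏ i, b i ^ (e i / p)) * c), ?_⟩
  rw [pfisterForm, Fintype.sum_eq_single r fun j hj => by
    rw [Pi.single_eq_of_ne hj, zero_pow hp.ne_zero, mul_zero]]
  rw [Pi.single_eq_same, mul_pow, ← Finset.prod_pow, ← mul_assoc, ← Finset.prod_mul_distrib]
  simp only [← pow_mul, ← pow_add, r, mul_comm _ p, Nat.mod_add_div]

theorem pow_mem_range_pfisterForm (c : L) : c ^ p ∈ Set.range (pfisterForm p b) := by
  simpa using prod_pow_mul_pow_mem_range_pfisterForm p b 0 c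

theorem apply_mem_range_pfisterForm (i : Fin n) : b i ∈ Set.range (pfisterForm p b) := by
  classical
  have hbi : ∏ k, b k ^ (Pi.single i 1 : Fin n → ℕ) k = b i := by
    rw [Fintype.prod_eq_single i fun k hk => by rw [Pi.single_eq_of_ne hk, pow_zero]]
    rw [Pi.single_eq_same, pow_one]
  simpa [hbi] using prod_pow_mul_pow_mem_range_pfisterForm p b (Pi.single i 1) 1

variable [CharP L p]

theorem pfisterForm_add (x y : (Fin n → Fin p) → L) :
    pfisterForm p b (x + y) = pfisterForm p b x + pfisterForm p b y := by
  simp only [pfisterForm, Pi.add_apply, add_pow_char, mul_add, Finset.sum_add_distrib]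

def pfisterFormHom : ((Fin n → Fin p) → L) →+ L :=
  AddMonoidHom.mk' (pfisterForm p b) (pfisterForm_add p b)

theorem coe_pfisterFormHom_range :
    ((pfisterFormHom p b).range : Set L) = Set.range (pfisterForm p b) :=
  AddMonoidHom.coe_range _

theorem pfisterForm_mul_mem_range (x y : (Fin n → Fin p) → L) :
    pfisterForm p b x * pfisterForm p b y ∈ Set.range (pfisterForm p b) := by
  rw [← coe_pfisterFormHom_range, pfisterForm, pfisterForm, Finset.sum_mul_sum]
  refine sum_mem fun j _ => sum_mem fun k _ => ?_
  have hjk : (∏ i, b i ^ (j i : ℕ)) * x j ^ p * ((∏ i, b i ^ (k i : ℕ)) * y k ^ p) =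
      (∏ i, b i ^ ((j i : ℕ) + k i)) * (x j * y k) ^ p := by
    simp only [pow_add, Finset.prod_mul_distrib, mul_pow]
    ring
  rw [hjk, ← SetLike.mem_coe, coe_pfisterFormHom_range]
  exact prod_pow_mul_pow_mem_range_pfisterForm p b _ _

def pfisterValueSubring : Subring L :=
  { (pfisterFormHom p b).range with
    one_mem' := by
      change (1 : L) ∈ ((pfisterFormHom p b).range : Set L)
      rw [coe_pfisterFormHom_range]
      simpa using pow_mem_range_pfisterForm p b 1
    mul_mem' := by
      rintro _ _ ⟨x, rfl⟩ ⟨y, rfl⟩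
      exact pfisterForm_mul_mem_range p b x y }

theorem coe_pfisterValueSubring :
    (pfisterValueSubring p b : Set L) = Set.range (pfisterForm p b) :=
  coe_pfisterFormHom_range p b

def pfisterValueSubfield : Subfield L :=
  { pfisterValueSubring p b with
    inv_mem' := fun _ =>
      (pfisterValueSubring p b).inv_mem_of_forall_pow_mem (Fact.out : p.Prime).ne_zero
        fun c => by
          rw [← SetLike.mem_coe, coe_pfisterValueSubring]
          exact pow_mem_range_pfisterForm p b c }

theorem coe_pfisterValueSubfield :
    (pfisterValueSubfield p b : Set L) = Set.range (pfisterForm p b) :=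
  coe_pfisterValueSubring p b

end PfisterForm

theorem pfister_value_set_eq_subfield_general
    {F L : Type*} [Field F] [Field L] [Algebra F L]
    (p n : ℕ) [Fact p.Prime] [CharP L p]
    (a : Fin n → F) :
    Set.range (pfisterForm p (fun i => algebraMap F L (a i))) =
      (Subfield.closure ({y : L | ∃ c : L, c ^ p = y} ∪
        Set.range (fun i => algebraMap F L (a i))) : Set L) := by
  set b : Fin n → L := fun i => algebraMap F L (a i)
  rw [← coe_pfisterValueSubfield, SetLike.coe_set_eq]
  refine le_antisymm ?_ (Subfield.closure_le.mpr ?_)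
  · rintro _ ⟨x, rfl⟩
    exact pfisterForm_mem_of_forall_pow_mem p b (Subfield.closure _)
      (fun c => Subfield.subset_closure (Or.inl ⟨c, rfl⟩))
      (fun i => Subfield.subset_closure (Or.inr ⟨i, rfl⟩)) x
  · rintro _ (⟨c, rfl⟩ | ⟨i, rfl⟩)
    · exact pow_mem_range_pfisterForm p b c
    · exact apply_mem_range_pfisterForm p b i

/-- Over any field extension L/F, the value set of ⟨⟨a_1,...,a_n⟩⟩ equals the
subfield L^p(a_1,...,a_n) of L. -/
theorem pfister_value_set_eq_subfield
    {F L : Type*} [Field F] [Field L] [Algebra F L]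
    (p n : ℕ) [Fact p.Prime] [CharP F p] [CharP L p]
    (a : Fin n → F) (ha : ∀ i, a i ≠ 0) :
    Set.range (pfisterForm p (fun i => algebraMap F L (a i))) =
      (Subfield.closure ({y : L | ∃ c : L, c ^ p = y} ∪
        Set.range (fun i => algebraMap F L (a i))) : Set L) :=
  pfister_value_set_eq_subfield_general p n a
end

section
/- Let π = ⟨⟨a_1,...,a_n⟩⟩ be an anisotropic quasi-Pfister form over F, and let L/F be a field extension such that π_L is isotropic. Then there exists a proper subset {a_{j_1},...,a_{j_m}} ⊂ {a_1,...,a_n} such that the quasi-Pfister form ⟨⟨a_{j_1},...,a_{j_m}⟩⟩ is anisotropic over L and L^p(a_1,...,a_n) = L^p(a_{j_1},...,a_{j_m}). -/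
open Finset Polynomial

set_option linter.unusedSectionVars false
set_option linter.unnecessarySeqFocus false

section PF

variable {L : Type*} [Field L] {p : ℕ} [Fact p.Prime] [CharP L p]
variable {ι κ : Type*} [Fintype ι] [DecidableEq ι] [Fintype κ] [DecidableEq κ]

private theorem pne : p ≠ 0 := (Fact.out : p.Prime).ne_zero

instance : NeZero p := ⟨(Fact.out : p.Prime).ne_zero⟩

/-- monomial -/
def pmono (p : ℕ) (b : ι → L) (j : ι → Fin p) : L := ∏ i, b i ^ (j i : ℕ)

/-- general-index quasi-Pfister form -/
def pform (p : ℕ) (b : ι → L) (x : (ι → Fin p) → L) : L :=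
  ∑ j, pmono p b j * x j ^ p

theorem pform_add (b : ι → L) (x y : (ι → Fin p) → L) :
    pform p b (x + y) = pform p b x + pform p b y := by
  simp [pform, add_pow_char, mul_add, Finset.sum_add_distrib]

theorem pform_neg (b : ι → L) (x : (ι → Fin p) → L) :
    pform p b (-x) = - pform p b x := by
  have h : ∀ c : L, (-c) ^ p = -(c ^ p) := fun c => by
    rw [neg_eq_zero_sub, sub_pow_char, zero_pow pne, zero_sub]
  simp [pform, h, mul_neg, Finset.sum_neg_distrib]

theorem pform_single (b : ι → L) (j : ι → Fin p) (c : L) :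
    pform p b (Pi.single j c) = pmono p b j * c ^ p := by
  rw [pform, Finset.sum_eq_single j]
  · rw [Pi.single_eq_same]
  · intro k _ hk; rw [Pi.single_eq_of_ne hk, zero_pow pne, mul_zero]
  · simp

theorem pmono_zero (b : ι → L) : pmono p b 0 = 1 := by simp [pmono]

theorem pmono_single (b : ι → L) (i : ι) :
    pmono p b (Pi.single i 1) = b i := by
  rw [pmono, Finset.prod_eq_single i]
  · have : ((1 : Fin p) : ℕ) = 1 := by
      have := (Fact.out : p.Prime).one_lt
      simp [Fin.val_one', Nat.mod_eq_of_lt this]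
    rw [Pi.single_eq_same, this, pow_one]
  · intro k _ hk; rw [Pi.single_eq_of_ne hk]; simp
  · simp

theorem pmono_mul (b : ι → L) (j k : ι → Fin p) :
    pmono p b j * pmono p b k
      = pmono p b (j + k) * (∏ i, b i ^ (((j i : ℕ) + (k i : ℕ)) / p)) ^ p := by
  rw [pmono, pmono, pmono, ← Finset.prod_mul_distrib, ← Finset.prod_pow,
    ← Finset.prod_mul_distrib]
  refine Finset.prod_congr rfl fun i _ => ?_
  rw [← pow_add, ← pow_mul, ← pow_add]
  congr 1
  have h : (((j + k) i : Fin p) : ℕ) = ((j i : ℕ) + (k i : ℕ)) % p := by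
    simp [Fin.val_add]
  rw [h]
  exact (Nat.mod_add_div' _ p).symm

theorem pform_mul (b : ι → L) (x y : (ι → Fin p) → L) :
    pform p b x * pform p b y =
      pform p b (fun l => ∑ j,
        (∏ i, b i ^ (((j i : ℕ) + (((l - j) i : Fin p) : ℕ)) / p)) * (x j * y (l - j))) := by
  have key : ∀ j k : ι → Fin p,
      (pmono p b j * x j ^ p) * (pmono p b k * y k ^ p)
        = pmono p b (j + k) *
            ((∏ i, b i ^ (((j i : ℕ) + (k i : ℕ)) / p)) * (x j * y k)) ^ p := by
    intro j k
    rw [mul_pow, mul_pow]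
    calc (pmono p b j * x j ^ p) * (pmono p b k * y k ^ p)
        = (pmono p b j * pmono p b k) * (x j ^ p * y k ^ p) := by ring
      _ = _ := by rw [pmono_mul]; ring
  calc pform p b x * pform p b y
      = ∑ j, ∑ k, (pmono p b j * x j ^ p) * (pmono p b k * y k ^ p) := by
        rw [pform, pform, Finset.sum_mul_sum]
    _ = ∑ j, ∑ l, pmono p b l *
          ((∏ i, b i ^ (((j i : ℕ) + (((l - j) i : Fin p) : ℕ)) / p)) * (x j * y (l - j))) ^ p := by
        refine Finset.sum_congr rfl fun j _ => ?_
        refine Fintype.sum_equiv (Equiv.addLeft j) _ _ fun k => ?_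
        rw [key]
        simp only [Equiv.coe_addLeft]
        congr 2 <;> rw [add_sub_cancel_left]
    _ = ∑ l, ∑ j, pmono p b l *
          ((∏ i, b i ^ (((j i : ℕ) + (((l - j) i : Fin p) : ℕ)) / p)) * (x j * y (l - j))) ^ p :=
        Finset.sum_comm
    _ = _ := by
        rw [pform]
        refine Finset.sum_congr rfl fun l _ => ?_
        rw [← Finset.mul_sum, sum_pow_char]

theorem pform_zero_eq (b : ι → L) : pform p b 0 = 0 := by
  simp [pform, zero_pow pne]

theorem range_mul (b : ι → L) {u v : L} (hu : u ∈ Set.range (pform p b))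
    (hv : v ∈ Set.range (pform p b)) : u * v ∈ Set.range (pform p b) := by
  obtain ⟨x, rfl⟩ := hu; obtain ⟨y, rfl⟩ := hv
  exact ⟨_, (pform_mul b x y).symm⟩

theorem range_pow_p (b : ι → L) (c : L) : c ^ p ∈ Set.range (pform p b) :=
  ⟨Pi.single 0 c, by rw [pform_single, pmono_zero, one_mul]⟩

/-- the subfield of values of the quasi-Pfister form -/
def pfield (p : ℕ) [Fact p.Prime] [CharP L p] (b : ι → L) : Subfield L where
  carrier := Set.range (pform p b)
  zero_mem' := ⟨0, pform_zero_eq b⟩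
  one_mem' := ⟨Pi.single 0 1, by rw [pform_single, pmono_zero, one_pow, mul_one]⟩
  add_mem' := by rintro _ _ ⟨x, rfl⟩ ⟨y, rfl⟩; exact ⟨x + y, pform_add b x y⟩
  neg_mem' := by rintro _ ⟨x, rfl⟩; exact ⟨-x, pform_neg b x⟩
  mul_mem' := fun hu hv => range_mul b hu hv
  inv_mem' := by
    rintro _ ⟨x, rfl⟩
    rcases eq_or_ne (pform p b x) 0 with h | h
    · rw [h, inv_zero]; exact ⟨0, pform_zero_eq b⟩
    · set v := pform p b x with hv
      have hpow : ∀ k : ℕ, v ^ k ∈ Set.range (pform p b) := by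
        intro k
        induction k with
        | zero => rw [pow_zero]; exact ⟨Pi.single 0 1, by rw [pform_single, pmono_zero, one_pow, mul_one]⟩
        | succ k ih => rw [pow_succ]; exact range_mul b ih ⟨x, rfl⟩
      obtain ⟨q, hq⟩ := Nat.exists_eq_succ_of_ne_zero (pne (p := p))
      have hid : v ^ q * (v⁻¹) ^ p = v⁻¹ := by
        rw [hq, pow_succ, ← mul_assoc, ← mul_pow, mul_inv_cancel₀ h, one_pow, one_mul]
      rw [← hid]
      exact range_mul b (hpow q) (range_pow_p b v⁻¹)

theorem mem_pfield_self (b : ι → L) (i : ι) : b i ∈ pfield p b :=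
  ⟨Pi.single (Pi.single i 1) 1, by rw [pform_single, pmono_single, one_pow, mul_one]⟩

theorem pow_p_mem_pfield (b : ι → L) (c : L) : c ^ p ∈ pfield p b := range_pow_p b c

theorem pfield_eq_closure (b : ι → L) :
    pfield p b = Subfield.closure ({y : L | ∃ c : L, c ^ p = y} ∪ Set.range b) := by
  apply le_antisymm
  · rintro _ ⟨x, rfl⟩
    rw [pform]
    refine Subfield.sum_mem _ fun j _ => Subfield.mul_mem _ ?_ ?_
    · rw [pmono]
      refine Subfield.prod_mem _ fun i _ => Subfield.pow_mem _ ?_ _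
      exact Subfield.subset_closure (Or.inr ⟨i, rfl⟩)
    · exact Subfield.subset_closure (Or.inl ⟨x j, rfl⟩)
  · rw [Subfield.closure_le]
    rintro y (⟨c, rfl⟩ | ⟨i, rfl⟩)
    · exact pow_p_mem_pfield b c
    · exact mem_pfield_self b i

theorem pform_comp (e : κ ≃ ι) (b : ι → L) (x : (ι → Fin p) → L) :
    pform p (b ∘ e) (fun j => x (j ∘ e.symm)) = pform p b x := by
  refine Fintype.sum_equiv (Equiv.arrowCongr e (Equiv.refl (Fin p))) _ _ fun j => ?_
  have h1 : pmono p (b ∘ e) j = pmono p b ((Equiv.arrowCongr e (Equiv.refl (Fin p))) j) := by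
    refine Fintype.prod_equiv e _ _ fun i => ?_
    simp [Equiv.arrowCongr]
  rw [h1]
  rfl

theorem aniso_comp (e : κ ≃ ι) (b : ι → L)
    (hb : ∀ x, pform p b x = 0 → x = 0) :
    ∀ y, pform p (b ∘ e) y = 0 → y = 0 := by
  intro y hy
  have h : pform p b (fun j' => y (j' ∘ e)) = 0 := by
    rw [← pform_comp e b]
    convert hy using 2
    funext j
    congr 1
    funext i
    simp
  have h2 := hb _ h
  funext j
  have h3 := congrFun h2 (j ∘ e.symm)
  have h4 : (j ∘ e.symm) ∘ e = j := by funext i; simp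
  rw [h4] at h3
  simpa using h3

theorem range_pform_comp (e : κ ≃ ι) (b : ι → L) :
    Set.range (pform p (b ∘ e)) = Set.range (pform p b) := by
  apply le_antisymm
  · rintro _ ⟨y, rfl⟩
    refine ⟨fun j' => y (j' ∘ e), ?_⟩
    rw [← pform_comp e b]
    congr 1
    funext j
    congr 1
    funext i
    simp
  · rintro _ ⟨x, rfl⟩
    exact ⟨_, pform_comp e b x⟩

theorem pfield_comp (e : κ ≃ ι) (b : ι → L) : pfield p (b ∘ e) = pfield p b :=
  SetLike.ext' (range_pform_comp e b)


/-- splitting of the form over `Option ι` -/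
theorem pform_option (b : Option ι → L) (y : (Option ι → Fin p) → L) :
    pform p b y = ∑ k : Fin p, b none ^ (k : ℕ) *
      pform p (b ∘ some) (fun f => y ((Equiv.piOptionEquivProd (β := fun _ => Fin p)).symm (k, f))) := by
  classical
  set E := (Equiv.piOptionEquivProd (β := fun _ : Option ι => Fin p))
  have h1 : pform p b y = ∑ kf : Fin p × (ι → Fin p),
      b none ^ (kf.1 : ℕ) * (pmono p (b ∘ some) kf.2 * y (E.symm kf) ^ p) := by
    rw [pform]
    refine Fintype.sum_equiv E _ _ fun j => ?_
    have hm : pmono p b j = b none ^ ((j none : Fin p) : ℕ) * pmono p (b ∘ some) (fun i => j (some i)) := by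
      rw [pmono, pmono, Fintype.prod_option]
      rfl
    rw [hm, mul_assoc, Equiv.symm_apply_apply]
    simp [E, Equiv.piOptionEquivProd]
  rw [h1, Fintype.sum_prod_type]
  refine Finset.sum_congr rfl fun k _ => ?_
  rw [pform, Finset.mul_sum]

theorem exists_slice_ne_zero (y : (Option ι → Fin p) → L) (hy : y ≠ 0) :
    ∃ k : Fin p, (fun f => y ((Equiv.piOptionEquivProd (β := fun _ : Option ι => Fin p)).symm (k, f))) ≠ 0 := by
  by_contra h
  push_neg at h
  apply hy
  funext j
  set E := (Equiv.piOptionEquivProd (β := fun _ : Option ι => Fin p))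
  have := congrFun (h (E j).1) (E j).2
  simpa using this

theorem mem_of_isotropic (b : ι → L) (c : L)
    (hb : ∀ x, pform p b x = 0 → x = 0)
    (hi : ∃ y : (Option ι → Fin p) → L, y ≠ 0 ∧
      pform p (fun o : Option ι => o.elim c b) y = 0) :
    c ∈ pfield p b := by
  classical
  obtain ⟨y, hy0, hy⟩ := hi
  set K := pfield p b with hK
  set E := (Equiv.piOptionEquivProd (β := fun _ : Option ι => Fin p)) with hE
  set u : Fin p → L := fun k => pform p b (fun f => y (E.symm (k, f))) with hu
  have hrel : ∑ k : Fin p, c ^ (k : ℕ) * u k = 0 := by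
    rw [← hy, pform_option (fun o : Option ι => o.elim c b) y]
    rfl
  have huK : ∀ k, u k ∈ K := fun k => ⟨_, rfl⟩
  set q : Polynomial K := ∑ k : Fin p, C (⟨u k, huK k⟩ : K) * X ^ (k : ℕ) with hq
  have hcoeff : ∀ k0 : Fin p, q.coeff (k0 : ℕ) = ⟨u k0, huK k0⟩ := by
    intro k0
    rw [hq, Polynomial.finset_sum_coeff, Finset.sum_eq_single k0]
    · rw [coeff_C_mul_X_pow, if_pos rfl]
    · intro k _ hk
      rw [coeff_C_mul_X_pow, if_neg (fun h => hk (Fin.val_injective h.symm))]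
    · simp
  obtain ⟨k0, hk0⟩ := exists_slice_ne_zero y hy0
  have huk0 : u k0 ≠ 0 := fun h => hk0 (hb _ h)
  have hq0 : q ≠ 0 := by
    intro h
    apply huk0
    have := hcoeff k0
    rw [h, Polynomial.coeff_zero] at this
    exact congrArg Subtype.val this.symm
  have haq : (aeval c) q = 0 := by
    rw [hq]
    rw [map_sum]
    have : ∀ k : Fin p, (aeval c) (C (⟨u k, huK k⟩ : K) * X ^ (k : ℕ)) = u k * c ^ (k : ℕ) := by
      intro k
      rw [map_mul, aeval_C, map_pow, aeval_X]
      rfl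
    rw [Finset.sum_congr rfl fun k _ => this k]
    rw [← hrel]
    exact Finset.sum_congr rfl fun k _ => mul_comm _ _
  have cpK : c ^ p ∈ K := pow_p_mem_pfield b c
  have haeval2 : (aeval c) (X ^ p - C (⟨c ^ p, cpK⟩ : K)) = 0 := by
    rw [map_sub, map_pow, aeval_X, aeval_C]
    show c ^ p - c ^ p = 0
    ring
  have hint : IsIntegral K c := ⟨X ^ p - C (⟨c ^ p, cpK⟩ : K),
    monic_X_pow_sub_C _ pne, by rw [← aeval_def]; exact haeval2⟩
  have hdvd : minpoly K c ∣ X ^ p - C (⟨c ^ p, cpK⟩ : K) := minpoly.dvd K c haeval2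
  set M := (minpoly K c).map (algebraMap K L) with hM
  have hMmonic : M.Monic := (minpoly.monic hint).map _
  have hmapdvd : M ∣ (X - C c) ^ p := by
    have h2 : (X ^ p - C (⟨c ^ p, cpK⟩ : K)).map (algebraMap K L) = (X - C c) ^ p := by
      rw [Polynomial.map_sub, Polynomial.map_pow, map_X, map_C]
      show (X : L[X]) ^ p - C (c ^ p) = _
      rw [C_pow, ← sub_pow_char]
    rw [← h2]
    exact Polynomial.map_dvd _ hdvd
  obtain ⟨i, _, hassoc⟩ := (dvd_prime_pow (Polynomial.prime_X_sub_C c) p).mp hmapdvd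
  have hMeq : M = (X - C c) ^ i :=
    Polynomial.eq_of_monic_of_associated hMmonic ((monic_X_sub_C c).pow i) hassoc
  have hiM : M.natDegree = i := by
    rw [hMeq, Polynomial.natDegree_pow, natDegree_X_sub_C, mul_one]
  have hdM : M.natDegree = (minpoly K c).natDegree := by
    rw [hM]; exact Polynomial.natDegree_map (algebraMap K L)
  have hd0 : 0 < i := by
    rw [← hiM, hdM]; exact minpoly.natDegree_pos hint
  have hdlt : i < p := by
    have h1 : (minpoly K c).degree ≤ q.degree := minpoly.degree_le_of_ne_zero K c hq0 haq
    have h2 : q.natDegree ≤ p - 1 := by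
      refine Polynomial.natDegree_sum_le_of_forall_le _ _ fun k _ => ?_
      refine le_trans (Polynomial.natDegree_C_mul_le _ _) ?_
      rw [Polynomial.natDegree_X_pow]
      exact Nat.le_sub_one_of_lt k.isLt
    have h3 : (minpoly K c).natDegree ≤ q.natDegree :=
      Polynomial.natDegree_le_natDegree h1
    have : i ≤ p - 1 := by rw [← hiM, hdM]; exact le_trans h3 h2
    exact lt_of_le_of_lt this (Nat.sub_lt (Nat.pos_of_ne_zero pne) one_pos)
  have hnc1 : M.nextCoeff = (i : ℕ) • (-c) := by
    rw [hMeq, Polynomial.Monic.nextCoeff_pow (monic_X_sub_C c), nextCoeff_X_sub_C]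
  have hnc2 : M.nextCoeff = algebraMap K L (minpoly K c).nextCoeff := by
    rw [hM]
    exact Polynomial.nextCoeff_map (RingHom.injective _) _
  set w : K := (minpoly K c).nextCoeff with hw
  have hceq : (i : L) * c = -(w : L) := by
    have : (w : L) = (i : ℕ) • (-c) := by rw [← hnc1, hnc2]; rfl
    rw [this, nsmul_eq_mul, mul_neg, neg_neg]
  have hine : (i : L) ≠ 0 := by
    intro h
    have := (CharP.cast_eq_zero_iff L p i).mp h
    have := Nat.le_of_dvd hd0 this
    omega
  have hc : c = (i : L)⁻¹ * (-(w : L)) := by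
    rw [← hceq, ← mul_assoc, inv_mul_cancel₀ hine, one_mul]
  rw [hc]
  exact K.mul_mem (K.inv_mem (natCast_mem K i)) (K.neg_mem w.2)

end PF


/-- If an anisotropic quasi-Pfister form ⟨⟨a_1,...,a_n⟩⟩ becomes isotropic over L,
then its anisotropic part over L is the quasi-Pfister form on a proper subset of
the a_i generating the same subfield L^p(a_1,...,a_n). -/
theorem pfister_isotropic_anisotropic_part
    {F L : Type*} [Field F] [Field L] [Algebra F L]
    (p n : ℕ) [Fact p.Prime] [CharP F p] [CharP L p]
    (a : Fin n → F) (ha : ∀ i, a i ≠ 0)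
    (haniso : ∀ x, pfisterForm p a x = 0 → x = 0)
    (hiso : ∃ x, x ≠ 0 ∧ pfisterForm p (fun i => algebraMap F L (a i)) x = 0) :
    ∃ m : ℕ, m < n ∧ ∃ j : Fin m → Fin n, Function.Injective j ∧
      (∀ x, pfisterForm p (fun i => algebraMap F L (a (j i))) x = 0 → x = 0) ∧
      Subfield.closure ({y : L | ∃ c : L, c ^ p = y} ∪
          Set.range (fun i => algebraMap F L (a (j i)))) =
        Subfield.closure ({y : L | ∃ c : L, c ^ p = y} ∪
          Set.range (fun i => algebraMap F L (a i))) := by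
  classical
  have hpne : p ≠ 0 := (Fact.out : p.Prime).ne_zero
  set A : Fin n → L := fun i => algebraMap F L (a i) with hA
  let P : Finset (Fin n) → Prop := fun S =>
    ∀ x : (({x // x ∈ S} → Fin p) → L),
      pform p (fun i : {x // x ∈ S} => A ↑i) x = 0 → x = 0
  have hP0 : P ∅ := by
    intro x hx
    simp only [pform, pmono] at hx
    rw [Fintype.sum_unique] at hx
    rw [Finset.univ_eq_empty, Finset.prod_empty, one_mul] at hx
    funext jj
    show x jj = 0
    refine pow_eq_zero_iff hpne |>.mp ?_
    convert hx using 2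
    exact congrArg x (Subsingleton.elim _ _)
  obtain ⟨S, hSmem, hmaxmem⟩ := Finset.exists_max_image
    (Finset.univ.filter P) Finset.card
    ⟨∅, Finset.mem_filter.mpr ⟨Finset.mem_univ _, hP0⟩⟩
  have hPS : P S := (Finset.mem_filter.mp hSmem).2
  have hmax : ∀ T, P T → T.card ≤ S.card := fun T hT =>
    hmaxmem T (Finset.mem_filter.mpr ⟨Finset.mem_univ T, hT⟩)
  have hPuniv : ¬ P Finset.univ := by
    intro hPU
    obtain ⟨x, hx0, hx⟩ := hiso
    have hxp : pform p A x = 0 := hx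
    set e : {x // x ∈ (Finset.univ : Finset (Fin n))} ≃ Fin n :=
      Equiv.subtypeUnivEquiv (fun i => Finset.mem_univ i) with he
    have hbase : ∀ z, pform p ((fun i : {x // x ∈ (Finset.univ : Finset (Fin n))} => A ↑i) ∘ ⇑e.symm) z = 0 → z = 0 :=
      aniso_comp e.symm _ hPU
    have hfam : ((fun i : {x // x ∈ (Finset.univ : Finset (Fin n))} => A ↑i) ∘ ⇑e.symm) = A := by
      funext i
      simp [e]
    rw [hfam] at hbase
    exact hx0 (hbase x hxp)
  have hcard : S.card ≤ n := by simpa using S.card_le_univ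
  have hm : S.card < n := by
    rcases lt_or_eq_of_le hcard with h | h
    · exact h
    · exfalso
      apply hPuniv
      have : S = Finset.univ := Finset.eq_univ_of_card S (by rw [h, Fintype.card_fin])
      rwa [this] at hPS
  set bS : {x // x ∈ S} → L := fun i => A ↑i with hbS
  set e1 : Fin S.card ≃ {x // x ∈ S} := (S.orderIsoOfFin rfl).toEquiv with he1
  set j : Fin S.card → Fin n := fun i => ↑(e1 i) with hj
  have hjinj : Function.Injective j := fun i1 i2 h =>
    e1.injective (Subtype.ext h)
  have haniso2 : ∀ x : ((Fin S.card → Fin p) → L), pform p (bS ∘ ⇑e1) x = 0 → x = 0 :=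
    aniso_comp e1 bS hPS
  have hallK : ∀ i : Fin n, A i ∈ pfield p bS := by
    intro i
    by_cases hi : i ∈ S
    · exact mem_pfield_self bS ⟨i, hi⟩
    · have hnP : ¬ P (insert i S) := by
        intro hPT
        have := hmax _ hPT
        rw [Finset.card_insert_of_notMem hi] at this
        omega
      simp only [P, not_forall] at hnP
      obtain ⟨x, hx1, hx2⟩ := hnP
      set e2 := Finset.subtypeInsertEquivOption hi with he2
      set y : (Option {x // x ∈ S} → Fin p) → L := fun jj => x (jj ∘ ⇑e2) with hy
      have hyform : pform p ((fun t : {x // x ∈ insert i S} => A ↑t) ∘ ⇑e2.symm) y = 0 := by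
        have := pform_comp (p := p) e2.symm (fun t : {x // x ∈ insert i S} => A ↑t) x
        rw [← this] at hx1
        exact hx1
      have hfam : ((fun t : {x // x ∈ insert i S} => A ↑t) ∘ ⇑e2.symm)
          = (fun o : Option {x // x ∈ S} => o.elim (A i) bS) := by
        funext o
        cases o with
        | none => rfl
        | some t => rfl
      rw [hfam] at hyform
      have hy0 : y ≠ 0 := by
        intro h0
        apply hx2
        funext jx
        have := congrFun h0 (jx ∘ ⇑e2.symm)
        have h4 : (jx ∘ ⇑e2.symm) ∘ ⇑e2 = jx := by funext t; simp
        rw [hy] at this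
        simp only [h4] at this
        simpa using this
      exact mem_of_isotropic bS (A i) hPS ⟨y, hy0, hyform⟩
  have hRHS : Subfield.closure ({y : L | ∃ c : L, c ^ p = y} ∪ Set.range A) = pfield p bS := by
    apply le_antisymm
    · rw [Subfield.closure_le]
      rintro z (⟨cc, rfl⟩ | ⟨i, rfl⟩)
      · exact pow_p_mem_pfield bS cc
      · exact hallK i
    · rw [pfield_eq_closure bS]
      apply Subfield.closure_mono
      apply Set.union_subset_union_right
      rintro z ⟨t, rfl⟩
      exact ⟨↑t, rfl⟩
  refine ⟨S.card, hm, j, hjinj, ?_, ?_⟩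
  · intro x hx
    exact haniso2 x hx
  · have hLHS : Subfield.closure ({y : L | ∃ c : L, c ^ p = y} ∪
        Set.range (fun i => algebraMap F L (a (j i)))) = pfield p (bS ∘ ⇑e1) :=
      (pfield_eq_closure (bS ∘ ⇑e1)).symm
    rw [hLHS, pfield_comp e1 bS, hRHS]
end

section
/- Let φ be an anisotropic quasilinear p-form over F and let L/F be a field extension over which φ becomes isotropic. Then lndeg_L(φ) < lndeg_F(φ), where lndeg_E(φ) = log_p [N_E(φ) : E^p] and N_E(φ) is the norm field of φ over E. -/
set_option synthInstance.maxHeartbeats 1000000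
set_option maxHeartbeats 1000000

/-- The diagonal quasilinear p-form with coefficients a. -/
def qlForm (p : ℕ) {F : Type*} [Field F] {n : ℕ} (a : Fin n → F) (x : Fin n → F) : F :=
  ∑ i, a i * x i ^ p

/-- The (logarithmic) norm degree lndeg_F(φ) = log_p [N_F(φ) : F^p] of the diagonal
quasilinear p-form with coefficients a. -/
noncomputable def lndeg (p : ℕ) (F : Type*) [Field F] [Fact p.Prime] [CharP F p]
    {n : ℕ} (a : Fin n → F) : ℕ :=
  Nat.log p (Module.finrank ((frobenius F p).fieldRange)
    (IntermediateField.adjoin (↥((frobenius F p).fieldRange))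
      {r : F | ∃ u ∈ Set.range (qlForm p a), ∃ v ∈ Set.range (qlForm p a),
        v ≠ 0 ∧ r = u / v}))

open IntermediateField Module Polynomial

section Aux

variable {E : Type*} [Field E] (p : ℕ) [Fact p.Prime] [CharP E p]

omit [CharP E p] in
lemma qlForm_single {n : ℕ} (b : Fin n → E) (i : Fin n) :
    qlForm p b (Pi.single i 1) = b i := by
  have hp : p ≠ 0 := (Fact.out : p.Prime).ne_zero
  unfold qlForm
  rw [Finset.sum_eq_single i]
  · simp
  · intro j _ hj
    rw [Pi.single_eq_of_ne hj, zero_pow hp, mul_zero]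
  · simp

lemma pow_mem_adjoin (T : IntermediateField (↥((frobenius E p).fieldRange)) E) (y : E) :
    y ^ p ∈ T := by
  have h : y ^ p ∈ (frobenius E p).fieldRange := ⟨y, rfl⟩
  have : algebraMap (↥((frobenius E p).fieldRange)) E ⟨y ^ p, h⟩ = y ^ p := rfl
  exact this ▸ T.algebraMap_mem _

lemma normField_eq {n : ℕ} (b : Fin n → E) (hb : ∀ i, b i ≠ 0) (h0 : 0 < n) :
    IntermediateField.adjoin (↥((frobenius E p).fieldRange))
      {r : E | ∃ u ∈ Set.range (qlForm p b), ∃ v ∈ Set.range (qlForm p b),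
        v ≠ 0 ∧ r = u / v}
    = IntermediateField.adjoin (↥((frobenius E p).fieldRange))
        (Set.range fun i => b i / b ⟨0, h0⟩) := by
  set i0 : Fin n := ⟨0, h0⟩
  apply le_antisymm
  · rw [adjoin_le_iff]
    rintro r ⟨u, ⟨xv, rfl⟩, v, ⟨yv, rfl⟩, hv, rfl⟩
    set T := IntermediateField.adjoin (↥((frobenius E p).fieldRange))
        (Set.range fun i => b i / b i0) with hT
    have hnum : ∀ x : Fin n → E, qlForm p b x / b i0 = ∑ i, (b i / b i0) * x i ^ p := by
      intro x
      unfold qlForm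
      rw [Finset.sum_div]
      exact Finset.sum_congr rfl fun i _ => by ring
    have hmem : ∀ x : Fin n → E, qlForm p b x / b i0 ∈ T := by
      intro x
      rw [hnum]
      exact sum_mem fun i _ =>
        mul_mem (subset_adjoin _ _ ⟨i, rfl⟩) (pow_mem_adjoin p T _)
    have key : qlForm p b xv / qlForm p b yv
        = (qlForm p b xv / b i0) / (qlForm p b yv / b i0) := by
      rw [div_div_div_cancel_right₀]
      exact hb i0
    rw [key]
    exact div_mem (hmem xv) (hmem yv)
  · rw [adjoin_le_iff]
    rintro r ⟨i, rfl⟩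
    exact subset_adjoin _ _
      ⟨b i, ⟨Pi.single i 1, qlForm_single p b i⟩,
       b i0, ⟨Pi.single i0 1, qlForm_single p b i0⟩, hb i0, rfl⟩

end Aux

lemma exists_ne_zero_mulVec_eq_zero {F L : Type*} [Field F] [Field L] [Algebra F L]
    {N n : ℕ} (G : Matrix (Fin N) (Fin n) F) {x : Fin n → L} (hx : x ≠ 0)
    (hGx : (G.map (algebraMap F L)).mulVec x = 0) :
    ∃ z : Fin n → F, z ≠ 0 ∧ G.mulVec z = 0 := by
  by_contra hcon
  push_neg at hcon
  have hker : LinearMap.ker (Matrix.toLin' G) = ⊥ := by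
    rw [LinearMap.ker_eq_bot']
    intro z hz
    by_contra hz0
    exact hcon z hz0 (by simpa [Matrix.toLin'_apply] using hz)
  obtain ⟨f, hf⟩ := (Matrix.toLin' G).exists_leftInverse_of_injective hker
  have hBG : LinearMap.toMatrix' f * G = 1 := by
    have := congrArg LinearMap.toMatrix' hf
    rwa [LinearMap.toMatrix'_comp, LinearMap.toMatrix'_id, LinearMap.toMatrix'_toLin'] at this
  have hBG' : (LinearMap.toMatrix' f).map (algebraMap F L) * G.map (algebraMap F L) = 1 := by
    rw [← Matrix.map_mul, hBG, Matrix.map_one _ (map_zero _) (map_one _)]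
  apply hx
  have : ((LinearMap.toMatrix' f).map (algebraMap F L)).mulVec
      ((G.map (algebraMap F L)).mulVec x) = x := by
    rw [Matrix.mulVec_mulVec, hBG', Matrix.one_mulVec]
  rw [hGx, Matrix.mulVec_zero] at this
  exact this.symm

section PowRank

variable {K E : Type*} [Field K] [Field E] [Algebra K E]
  (p : ℕ) [Fact p.Prime] [CharP E p]

lemma finrank_adjoin_pow_isPow (S : Finset E)
    (hS : ∀ x ∈ S, ∃ c : K, algebraMap K E c = x ^ p) :
    ∃ s : ℕ, Module.finrank K (IntermediateField.adjoin K (S : Set E)) = p ^ s := by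
  classical
  have hp : p.Prime := Fact.out
  induction S using Finset.induction_on with
  | empty =>
      refine ⟨0, ?_⟩
      rw [Finset.coe_empty, IntermediateField.adjoin_empty, pow_zero,
        IntermediateField.finrank_bot]
  | @insert x S hxS ih =>
      obtain ⟨s, hs⟩ := ih fun y hy => hS y (Finset.mem_insert_of_mem hy)
      obtain ⟨c, hc⟩ := hS x (Finset.mem_insert_self x S)
      set M := IntermediateField.adjoin K (S : Set E) with hM
      have hint : ∀ y ∈ (S : Set E), IsIntegral K y := by
        intro y hy
        obtain ⟨c', hc'⟩ := hS y (Finset.mem_insert_of_mem hy)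
        exact IsIntegral.of_pow hp.pos (hc' ▸ isIntegral_algebraMap)
      have hfd : FiniteDimensional K M :=
        IntermediateField.finiteDimensional_adjoin hint
      have hxpM : x ^ p ∈ M := hc ▸ M.algebraMap_mem c
      set xp : M := ⟨x ^ p, hxpM⟩ with hxp
      have hxpa : algebraMap M E xp = x ^ p := rfl
      have hxint : IsIntegral M x :=
        IsIntegral.of_pow hp.pos (hxpa ▸ isIntegral_algebraMap)
      set Y := IntermediateField.adjoin M {x} with hY
      have hYfr : Module.finrank M Y = 1 ∨ Module.finrank M Y = p := by
        by_cases hex : ∃ b : M, b ^ p = xp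
        · left
          obtain ⟨b, hb⟩ := hex
          have hxb : x = algebraMap M E b := by
            have h0 : (x - algebraMap M E b) ^ p = 0 := by
              rw [sub_pow_char, ← map_pow, hb, hxpa, sub_self]
            exact sub_eq_zero.mp (pow_eq_zero_iff hp.ne_zero |>.mp h0)
          have : Y = ⊥ := by
            rw [hY, IntermediateField.adjoin_simple_eq_bot_iff,
              IntermediateField.mem_bot]
            exact ⟨b, hxb.symm⟩
          rw [this, IntermediateField.finrank_bot]
        · right
          push_neg at hex
          have hirr : Irreducible ((X : M[X]) ^ p - C xp) :=
            X_pow_sub_C_irreducible_of_prime hp hex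
          have hmin : minpoly M x = (X : M[X]) ^ p - C xp := by
            refine (minpoly.eq_of_irreducible_of_monic hirr ?_ ?_).symm
            · simp [hxpa]
            · exact monic_X_pow_sub_C _ hp.ne_zero
          rw [hY, IntermediateField.adjoin.finrank hxint, hmin, natDegree_X_pow_sub_C]
      have htower : Module.finrank K (IntermediateField.adjoin K ((insert x S : Finset E) : Set E))
          = Module.finrank K M * Module.finrank M Y := by
        have h1 : (Y.restrictScalars K) = IntermediateField.adjoin K ((insert x S : Finset E) : Set E) := by
          rw [hY, IntermediateField.adjoin_adjoin_left]
          congr 1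
          rw [Finset.coe_insert]
          ext y
          simp [or_comm]
        rw [← h1]
        exact (Module.finrank_mul_finrank K M Y).symm
      rcases hYfr with h | h
      · exact ⟨s, by rw [htower, h, mul_one, hs]⟩
      · exact ⟨s + 1, by rw [htower, h, hs, pow_succ]⟩

end PowRank

/-- If an anisotropic quasilinear p-form becomes isotropic over L/F, then its norm
degree strictly drops: lndeg_L(φ) < lndeg_F(φ). -/
theorem lndeg_lt_of_isotropic
    {F L : Type*} [Field F] [Field L] [Algebra F L]
    (p n : ℕ) [Fact p.Prime] [CharP F p] [CharP L p]
    (a : Fin n → F)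
    (haniso : ∀ x, qlForm p a x = 0 → x = 0)
    (hiso : ∃ x : Fin n → L, x ≠ 0 ∧ qlForm p (fun i => algebraMap F L (a i)) x = 0) :
    lndeg p L (fun i => algebraMap F L (a i)) < lndeg p F a := by
  classical
  have hp : p.Prime := Fact.out
  obtain ⟨x, hx0, hxz⟩ := hiso
  have hn : 0 < n := by
    by_contra h
    push_neg at h
    apply hx0
    funext i
    exact absurd i.isLt (by omega)
  set i0 : Fin n := ⟨0, hn⟩ with hi0
  have ha0 : ∀ i, a i ≠ 0 := by
    intro i hai
    have h1 : qlForm p a (Pi.single i 1) = 0 := by rw [qlForm_single]; exact hai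
    have h2 := congrFun (haniso _ h1) i
    simp at h2
  set f : F →+* L := (algebraMap F L : F →+* L) with hf
  have hfa0 : ∀ i, f (a i) ≠ 0 := fun i => by simp [ha0 i]
  set r : Fin n → F := fun i => a i / a i0 with hr
  -- identify the norm fields
  set KF := (frobenius F p).fieldRange with hKF
  set KL := (frobenius L p).fieldRange with hKL
  have hNFeq := normField_eq p a ha0 hn
  have hNLeq := normField_eq p (fun i => f (a i)) hfa0 hn
  set NF := IntermediateField.adjoin (↥KF) (Set.range r) with hNF
  set NL := IntermediateField.adjoin (↥KL) (Set.range fun i => f (r i)) with hNL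
  have hrangeL : (Set.range fun i => f (a i) / f (a i0)) = Set.range fun i => f (r i) := by
    apply congrArg Set.range
    funext i
    simp only [hr]
    exact (map_div₀ f _ _).symm
  have hlndegF : lndeg p F a = Nat.log p (Module.finrank (↥KF) (↥NF)) := by
    unfold lndeg
    rw [hNFeq]
  have hlndegL : lndeg p L (fun i => f (a i)) = Nat.log p (Module.finrank (↥KL) (↥NL)) := by
    unfold lndeg
    rw [hNLeq, hrangeL]
  -- finrank of NF is a power of p
  obtain ⟨s, hs⟩ : ∃ s, Module.finrank (↥KF) (↥NF) = p ^ s := by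
    have himg : ((Finset.univ.image r : Finset F) : Set F) = Set.range r := by
      rw [Finset.coe_image, Finset.coe_univ, Set.image_univ]
    have h := finrank_adjoin_pow_isPow (K := ↥KF) p (Finset.univ.image r) ?_
    · rwa [himg] at h
    · intro y hy
      rw [Finset.mem_image] at hy
      obtain ⟨i, _, rfl⟩ := hy
      exact ⟨⟨(r i) ^ p, ⟨r i, rfl⟩⟩, rfl⟩
  haveI : Finite ↥(Set.range r) := (Set.finite_range r).to_subtype
  haveI hNFfd : FiniteDimensional (↥KF) (↥NF) :=
    IntermediateField.finiteDimensional_adjoin fun y hy => by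
      obtain ⟨i, rfl⟩ := hy
      exact IsIntegral.of_pow hp.pos
        ((show algebraMap (↥KF) F ⟨(r i) ^ p, ⟨r i, rfl⟩⟩ = (r i) ^ p from rfl) ▸
          isIntegral_algebraMap)
  set d := p ^ s with hd
  let v : Basis (Fin d) (↥KF) (↥NF) := (Module.finBasis (↥KF) (↥NF)).reindex (finCongr hs)
  let w : Fin d → F := fun j => ((v j : ↥NF) : F)
  have hcoe : ∀ y : ↥NF, (y : F) = ∑ j, ((v.repr y j : ↥KF) : F) * w j := by
    intro y
    conv_lhs => rw [← v.sum_repr y]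
    rw [show ((∑ j, v.repr y j • v j : ↥NF) : F)
        = algebraMap (↥NF) F (∑ j, v.repr y j • v j) from rfl]
    rw [map_sum]
    refine Finset.sum_congr rfl fun j _ => ?_
    rw [Algebra.smul_def, map_mul, ← IsScalarTower.algebraMap_apply]
    rfl
  have hroot : ∀ (y : ↥NF) (j : Fin d), ∃ gg : F, gg ^ p = ((v.repr y j : ↥KF) : F) := by
    intro y j
    obtain ⟨t, ht⟩ := (v.repr y j).2
    exact ⟨t, ht⟩
  have hrNF : ∀ i, r i ∈ NF := fun i => subset_adjoin _ _ ⟨i, rfl⟩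
  set ρ : Fin n → ↥NF := fun i => ⟨r i, hrNF i⟩ with hρ
  choose g hg using fun i j => hroot (ρ i) j
  have hexp : ∀ i, r i = ∑ j, (g i j) ^ p * w j := by
    intro i
    rw [show r i = ((ρ i : ↥NF) : F) from rfl, hcoe (ρ i)]
    exact Finset.sum_congr rfl fun j _ => by rw [hg]
  -- the L-side
  set wL : Fin d → L := fun j => f (w j) with hwL
  set W : Submodule (↥KL) L := Submodule.span (↥KL) (Set.range wL) with hW
  have hfKL : ∀ c : ↥KF, f (c : F) ∈ KL := by
    rintro ⟨c, t, rfl⟩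
    exact ⟨f t, by simp [frobenius_def, map_pow]⟩
  have hWmem : ∀ y : ↥NF, f (y : F) ∈ W := by
    intro y
    rw [hcoe y, map_sum]
    refine Submodule.sum_mem _ fun j _ => ?_
    rw [map_mul]
    have hk := hfKL (v.repr y j)
    have heq : f ((v.repr y j : ↥KF) : F) * f (w j) = (⟨_, hk⟩ : ↥KL) • wL j := by
      rw [Algebra.smul_def]
      rfl
    rw [heq]
    exact Submodule.smul_mem _ _ (Submodule.subset_span ⟨j, rfl⟩)
  -- the key linear dependence
  have hdep : ¬ LinearIndependent (↥KL) wL := by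
    intro hli
    have h4 : ∑ i, f (r i) * x i ^ p = 0 := by
      have h4a : f (a i0) * ∑ i, f (r i) * x i ^ p = 0 := by
        rw [Finset.mul_sum, ← hxz]
        unfold qlForm
        refine Finset.sum_congr rfl fun i _ => ?_
        rw [← mul_assoc, ← map_mul]
        have : a i0 * r i = a i := by
          simp only [hr]
          rw [mul_comm]
          exact div_mul_cancel₀ _ (ha0 i0)
        rw [this]
      rcases mul_eq_zero.mp h4a with h | h
      · exact absurd h (hfa0 i0)
      · exact h
    have h5 : ∀ j, ∑ i, f (g i j) * x i = 0 := by
      have h5a : ∑ j, (⟨(∑ i, f (g i j) * x i) ^ p, ⟨_, rfl⟩⟩ : ↥KL) • wL j = 0 := by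
        have hkey : ∑ j, (∑ i, f (g i j) * x i) ^ p * wL j = 0 := by
          calc ∑ j, (∑ i, f (g i j) * x i) ^ p * wL j
              = ∑ j, ∑ i, (f (g i j)) ^ p * x i ^ p * wL j := by
                refine Finset.sum_congr rfl fun j _ => ?_
                rw [sum_pow_char, Finset.sum_mul]
                exact Finset.sum_congr rfl fun i _ => by rw [mul_pow]
            _ = ∑ i, (∑ j, (f (g i j)) ^ p * wL j) * x i ^ p := by
                rw [Finset.sum_comm]
                refine Finset.sum_congr rfl fun i _ => ?_
                rw [Finset.sum_mul]
                exact Finset.sum_congr rfl fun j _ => by ring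
            _ = ∑ i, f (r i) * x i ^ p := by
                refine Finset.sum_congr rfl fun i _ => ?_
                congr 1
                rw [hexp i, map_sum]
                exact Finset.sum_congr rfl fun j _ => by rw [map_mul, map_pow]
            _ = 0 := h4
        rw [← hkey]
        exact Finset.sum_congr rfl fun j _ => by
          rw [Algebra.smul_def]
          rfl
      have h5b := Fintype.linearIndependent_iff.mp hli _ h5a
      intro j
      have h5c := h5b j
      rw [Subtype.ext_iff] at h5c
      exact pow_eq_zero_iff hp.ne_zero |>.mp h5c
    set G : Matrix (Fin d) (Fin n) F := Matrix.of (fun j i => g i j) with hG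
    have hGx : (G.map f).mulVec x = 0 := by
      funext j
      simpa [Matrix.mulVec, dotProduct, hG] using h5 j
    obtain ⟨z, hz0, hzG⟩ := exists_ne_zero_mulVec_eq_zero G hx0 hGx
    have hzj : ∀ j, ∑ i, g i j * z i = 0 := by
      intro j
      have := congrFun hzG j
      simpa [Matrix.mulVec, dotProduct, hG] using this
    apply hz0
    apply haniso
    unfold qlForm
    calc ∑ i, a i * z i ^ p = ∑ i, a i0 * (r i * z i ^ p) := by
          refine Finset.sum_congr rfl fun i _ => ?_
          rw [← mul_assoc]
          congr 1
          simp only [hr]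
          rw [mul_comm]
          exact (div_mul_cancel₀ _ (ha0 i0)).symm
      _ = a i0 * ∑ i, r i * z i ^ p := by rw [Finset.mul_sum]
      _ = a i0 * ∑ j, (∑ i, g i j * z i) ^ p * w j := by
          congr 1
          calc ∑ i, r i * z i ^ p
              = ∑ i, ∑ j, (g i j) ^ p * z i ^ p * w j := by
                refine Finset.sum_congr rfl fun i _ => ?_
                rw [hexp i, Finset.sum_mul]
                exact Finset.sum_congr rfl fun j _ => by ring
            _ = ∑ j, (∑ i, g i j * z i) ^ p * w j := by
                rw [Finset.sum_comm]
                refine Finset.sum_congr rfl fun j _ => ?_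
                rw [sum_pow_char, Finset.sum_mul]
                exact Finset.sum_congr rfl fun i _ => by rw [mul_pow]
      _ = 0 := by
          rw [Finset.sum_eq_zero, mul_zero]
          intro j _
          rw [hzj j, zero_pow hp.ne_zero, zero_mul]
  -- conclude: finrank of NL is < p ^ s
  have hone : (1 : L) ∈ W := by
    have h1 := hWmem 1
    simpa using h1
  have hmulW : ∀ u ∈ W, ∀ t ∈ W, u * t ∈ W := by
    intro u hu t ht
    have hWW : W * W ≤ W := by
      rw [hW, Submodule.span_mul_span, Submodule.span_le]
      rintro y hy
      rw [Set.mem_mul] at hy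
      obtain ⟨y1, ⟨j, rfl⟩, y2, ⟨k, rfl⟩, rfl⟩ := hy
      have h1 : wL j * wL k = f ((v j * v k : ↥NF) : F) := by
        simp only [hwL]
        rw [← map_mul]
        norm_cast
      rw [h1]
      exact hWmem _
    exact hWW (Submodule.mul_mem_mul hu ht)
  haveI hWfd : FiniteDimensional (↥KL) W :=
    FiniteDimensional.span_of_finite _ (Set.finite_range wL)
  set WA : Subalgebra (↥KL) L := W.toSubalgebra hone (fun x y hx hy => hmulW x hx y hy) with hWA
  haveI : FiniteDimensional (↥KL) (↥WA) := hWfd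
  haveI : Algebra.IsAlgebraic (↥KL) (↥WA) := Algebra.IsAlgebraic.of_finite _ _
  set WFld : IntermediateField (↥KL) L := Algebra.IsAlgebraic.toIntermediateField WA with hWFld
  have hNLW : NL ≤ WFld := by
    rw [hNL, adjoin_le_iff]
    rintro y ⟨i, rfl⟩
    show f (r i) ∈ WFld
    exact hWmem (ρ i)
  have hsub : NL.toSubmodule ≤ W := fun y hy => (hNLW hy : y ∈ WFld)
  haveI : FiniteDimensional (↥KL) (↥NL) := Submodule.finiteDimensional_of_le hsub
  have hlt : Module.finrank (↥KL) (↥NL) < d := by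
    have h8 : Module.finrank (↥KL) NL.toSubmodule ≤ Module.finrank (↥KL) W :=
      Submodule.finrank_mono hsub
    have h9 : Module.finrank (↥KL) W ≤ d := by
      have := finrank_range_le_card (R := ↥KL) wL
      simpa [Set.finrank, Fintype.card_fin, hW] using this
    have h10 : Module.finrank (↥KL) W ≠ d := by
      intro he
      apply hdep
      rw [linearIndependent_iff_card_eq_finrank_span]
      simp only [Set.finrank, Fintype.card_fin]
      rw [← hW, he]
    exact lt_of_le_of_lt h8 (lt_of_le_of_ne h9 h10)
  have hpos : Module.finrank (↥KL) (↥NL) ≠ 0 := Module.finrank_pos.ne'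
  rw [hlndegL, hlndegF, hs, Nat.log_pow hp.one_lt]
  exact Nat.log_lt_of_lt_pow hpos (hd ▸ hlt)
end

section
/- Let φ be an anisotropic quasilinear p-form over F and let a ∈ F \ F^p. If φ becomes isotropic over F(a^{1/p}), then a ∈ N_F(φ), the norm field of φ. -/
open Polynomial

/-- If an anisotropic quasilinear p-form φ becomes isotropic over F(a^{1/p}) for
a ∈ F \ F^p, then a lies in the norm field N_F(φ). -/
theorem mem_norm_field_of_isotropic_over_pth_root
    {F L : Type*} [Field F] [Field L] [Algebra F L]
    (p n : ℕ) [Fact p.Prime] [CharP F p]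
    (c : Fin n → F)
    (haniso : ∀ x, qlForm p c x = 0 → x = 0)
    (a : F) (ha : ¬ ∃ y : F, y ^ p = a)
    (α : L) (hα : α ^ p = algebraMap F L a)
    (hgen : IntermediateField.adjoin F ({α} : Set L) = ⊤)
    (hiso : ∃ x : Fin n → L, x ≠ 0 ∧ qlForm p (fun i => algebraMap F L (c i)) x = 0) :
    a ∈ Subfield.closure ({y : F | ∃ z : F, z ^ p = y} ∪
      {r : F | ∃ u ∈ Set.range (qlForm p c), ∃ v ∈ Set.range (qlForm p c),
        v ≠ 0 ∧ r = u / v}) := by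
  classical
  obtain ⟨x, hx0, hxiso⟩ := hiso
  have hp : p.Prime := Fact.out
  have hinj : Function.Injective (algebraMap F L) := (algebraMap F L).injective
  have hchL : CharP L p := charP_of_injective_algebraMap hinj p
  have hirr : Irreducible (X ^ p - C a) :=
    X_pow_sub_C_irreducible_of_prime hp (fun b hb => ha ⟨b, hb⟩)
  have hroot : Polynomial.aeval α (X ^ p - C a) = 0 := by
    simp [hα]
  have hmonic : (X ^ p - C a).Monic := monic_X_pow_sub_C a hp.ne_zero
  have hint : IsIntegral F α := ⟨X ^ p - C a, hmonic, by simpa using hroot⟩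
  have hmin : X ^ p - C a = minpoly F α :=
    minpoly.eq_of_irreducible_of_monic hirr hroot hmonic
  -- power basis of L over F with generator α
  let pb : PowerBasis F L :=
    (IntermediateField.adjoin.powerBasis hint).map
      ((IntermediateField.equivOfEq hgen).trans IntermediateField.topEquiv)
  have hgenpb : pb.gen = α := by
    simp [pb]
  have hdim : pb.dim = p := by
    show (IntermediateField.adjoin.powerBasis hint).dim = p
    simp [IntermediateField.adjoin.powerBasis, ← hmin]
  -- decompose x over the power basis
  let r : Fin n → Fin pb.dim → F := fun i j => pb.basis.repr (x i) j
  have hxdecomp : ∀ i, x i = ∑ j, r i j • α ^ (j : ℕ) := by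
    intro i
    conv_lhs => rw [← pb.basis.sum_repr (x i)]
    refine Finset.sum_congr rfl fun j _ => ?_
    rw [PowerBasis.coe_basis, hgenpb]
  let d : Fin pb.dim → F := fun j => qlForm p c (fun i => r i j)
  have hxpow : ∀ i, (x i) ^ p = algebraMap F L (∑ j, r i j ^ p * a ^ (j : ℕ)) := by
    intro i
    rw [hxdecomp i, sum_pow_char, map_sum]
    refine Finset.sum_congr rfl fun j _ => ?_
    rw [_root_.smul_pow, ← pow_mul, mul_comm (j : ℕ) p, pow_mul, hα,
      ← map_pow (algebraMap F L) a, Algebra.smul_def, ← map_mul]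
  have key : ∑ j, d j * a ^ (j : ℕ) = 0 := by
    apply hinj
    rw [map_zero, ← hxiso]
    unfold qlForm
    simp only [hxpow, ← map_mul, ← map_sum]
    congr 1
    simp only [Finset.mul_sum]
    rw [Finset.sum_comm]
    refine Finset.sum_congr rfl fun j _ => ?_
    simp [d, qlForm, Finset.sum_mul, mul_assoc]
  -- find a nonzero value
  have hk : ∃ k, d k ≠ 0 := by
    by_contra h
    push_neg at h
    apply hx0
    funext i
    have hri : ∀ j, r i j = 0 := by
      intro j
      exact congrFun (haniso _ (h j)) i
    have hrepr : pb.basis.repr (x i) = 0 := by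
      ext j
      exact hri j
    exact pb.basis.repr.map_eq_zero_iff.mp hrepr
  obtain ⟨k, hk⟩ := hk
  set N : Subfield F := Subfield.closure ({y : F | ∃ z : F, z ^ p = y} ∪
      {r : F | ∃ u ∈ Set.range (qlForm p c), ∃ v ∈ Set.range (qlForm p c),
        v ≠ 0 ∧ r = u / v}) with hN
  have hpowmem : ∀ z : F, z ^ p ∈ N := fun z => Subfield.subset_closure (Or.inl ⟨z, rfl⟩)
  have hratio : ∀ j, d j / d k ∈ N := fun j =>
    Subfield.subset_closure (Or.inr ⟨d j, ⟨fun i => r i j, rfl⟩, d k, ⟨fun i => r i k, rfl⟩, hk, rfl⟩)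
  -- the polynomial over N with root a
  let e : Fin pb.dim → N := fun j => ⟨d j / d k, hratio j⟩
  let f : Polynomial N := ∑ j, C (e j) * X ^ (j : ℕ)
  have hfa : Polynomial.aeval a f = 0 := by
    have : Polynomial.aeval a f = ∑ j, (d j / d k) * a ^ (j : ℕ) := by
      simp only [f, e, map_sum, map_mul, Polynomial.aeval_C, map_pow, Polynomial.aeval_X]
      rfl
    rw [this]
    have : ∑ j, (d j / d k) * a ^ (j : ℕ) = (∑ j, d j * a ^ (j : ℕ)) / d k := by
      rw [Finset.sum_div]
      exact Finset.sum_congr rfl fun j _ => by ring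
    rw [this, key, zero_div]
  have hf0 : f ≠ 0 := by
    intro h
    have hcoeff : f.coeff (k : ℕ) = e k := by
      simp only [f, finset_sum_coeff, coeff_C_mul, coeff_X_pow]
      rw [Finset.sum_eq_single k]
      · simp
      · intro j _ hjk
        have : ¬ ((j : ℕ) = (k : ℕ)) := fun hc => hjk (Fin.ext hc)
        rw [if_neg (fun hc : (k:ℕ) = (j:ℕ) => this hc.symm), mul_zero]
      · simp
    rw [h] at hcoeff
    have : (e k : F) = 0 := by rw [← hcoeff]; simp
    rw [show (e k : F) = d k / d k from rfl, div_self hk] at this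
    exact one_ne_zero this
  have hfdeg : f.natDegree ≤ p - 1 := by
    refine natDegree_sum_le_of_forall_le _ _ fun j _ => ?_
    refine le_trans (natDegree_C_mul_le _ _) ?_
    rw [natDegree_X_pow]
    have : (j : ℕ) < p := hdim ▸ j.isLt
    omega
  -- a is integral over N
  have hapN : a ^ p ∈ N := hpowmem a
  have hintNa : IsIntegral N a := by
    refine ⟨X ^ p - C (⟨a ^ p, hapN⟩ : N), monic_X_pow_sub_C _ hp.ne_zero, ?_⟩
    simp only [eval₂_sub, eval₂_pow, eval₂_X, eval₂_C]
    show a ^ p - ((⟨a ^ p, hapN⟩ : N) : F) = 0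
    simp
  set μ := minpoly N a with hμ
  set m := μ.natDegree with hm
  have hm0 : 0 < m := minpoly.natDegree_pos hintNa
  have hmlep : m ≤ p - 1 := by
    have := minpoly.degree_le_of_ne_zero N a hf0 hfa
    exact le_trans (natDegree_le_natDegree this) hfdeg
  have hmltp : m < p := lt_of_le_of_lt hmlep (by omega)
  -- μ maps to (X - C a)^m over F
  have hdvd : μ ∣ (X ^ p - C (⟨a ^ p, hapN⟩ : N)) := by
    apply minpoly.dvd
    rw [map_sub, map_pow, Polynomial.aeval_X, Polynomial.aeval_C]
    show a ^ p - ((⟨a ^ p, hapN⟩ : N) : F) = 0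
    simp
  have hmapdvd : μ.map (algebraMap N F) ∣ (X - C a) ^ p := by
    have h1 : (X ^ p - C (⟨a ^ p, hapN⟩ : N)).map (algebraMap N F) = X ^ p - C (a ^ p) := by
      rw [Polynomial.map_sub, Polynomial.map_pow, map_X, map_C]
      rfl
    have h2 : (X - C a) ^ p = X ^ p - C (a ^ p) := by
      rw [sub_pow_char, ← C_pow]
    rw [h2, ← h1]
    exact Polynomial.map_dvd _ hdvd
  obtain ⟨i, hip, hassoc⟩ := (dvd_prime_pow (prime_X_sub_C a) p).mp hmapdvd
  have hmapmonic : (μ.map (algebraMap N F)).Monic :=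
    (minpoly.monic hintNa).map _
  have heq : μ.map (algebraMap N F) = (X - C a) ^ i :=
    Polynomial.eq_of_monic_of_associated hmapmonic ((monic_X_sub_C a).pow i) hassoc
  have him : i = m := by
    have h1 : (μ.map (algebraMap N F)).natDegree = m :=
      natDegree_map_eq_of_injective (algebraMap N F).injective μ
    have h2 : ((X - C a) ^ i).natDegree = i := by
      rw [natDegree_pow, natDegree_X_sub_C, mul_one]
    rw [heq, h2] at h1
    exact h1
  rw [him] at heq
  -- extract the coefficient at m - 1
  have hcoeffmem : ((X - C a) ^ m).coeff (m - 1) ∈ N := by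
    rw [← heq, Polynomial.coeff_map]
    exact SetLike.coe_mem _
  have hcoeffval : ((X - C a) ^ m).coeff (m - 1) = -a * (m : F) := by
    rw [sub_eq_add_neg, ← C_neg, coeff_X_add_C_pow]
    have h1 : m - (m - 1) = 1 := by omega
    have h2 : m.choose (m - 1) = m := by
      have := Nat.choose_symm (show m - 1 ≤ m by omega)
      rw [h1] at this
      rw [← this, Nat.choose_one_right]
    rw [h1, h2, pow_one]
  rw [hcoeffval] at hcoeffmem
  have hmcast : (m : F) ≠ 0 := by
    rw [Ne, CharP.cast_eq_zero_iff F p m]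
    exact Nat.not_dvd_of_pos_of_lt hm0 hmltp
  have hmmem : ((m : ℕ) : F) ∈ N := natCast_mem N m
  have : a = (-a * (m : F)) * (-((m : F)⁻¹)) := by
    field_simp
  rw [this]
  exact N.mul_mem hcoeffmem (N.neg_mem (N.inv_mem hmmem))
end

section
/- Let φ be an anisotropic quasilinear p-form over F and let L/F be a separably generated field extension. Then φ_L is anisotropic. -/
/-!
Over the rational function field `F(s)`, clear denominators to get a zero of the form in
polynomials; comparing coefficients of the monomials `p • m`, where `coeff (p • m) (f ^ p)` is
`(coeff m f) ^ p`, yields a zero over `F`. Over a separable extension `L / K`, the `p`-th powers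
of a `K`-basis of `L` form again a `K`-basis, and in it the coordinates of `∑ aᵢ xᵢ ^ p` are
`∑ aᵢ cᵢⱼ ^ p`, where `cᵢⱼ` are the coordinates of `xᵢ`.
-/

open MvPolynomial

theorem MvPolynomial.coeff_nsmul_pow_expChar {σ R : Type*} [CommRing R] (p : ℕ) [ExpChar R p]
    (f : MvPolynomial σ R) (m : σ →₀ ℕ) :
    coeff (p • m) (f ^ p) = coeff m f ^ p := by
  rw [← map_frobenius_expand, coeff_map, coeff_expand_smul _ (expChar_pos R p).ne', frobenius_def]

theorem Module.Basis.mapPowExpCharPowOfIsSeparable_repr_pow {K L ι : Type*} [Field K] [Field L]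
    [Algebra K L] [Algebra.IsSeparable K L] (q m : ℕ) [ExpChar K q] (b : Module.Basis ι K L)
    (y : L) :
    (b.mapPowExpCharPowOfIsSeparable q m).repr (y ^ q ^ m) =
      (b.repr y).mapRange (· ^ q ^ m) (zero_pow (expChar_pow_pos K q m).ne') := by
  have : ExpChar L q := expChar_of_injective_algebraMap (algebraMap K L).injective q
  apply (b.mapPowExpCharPowOfIsSeparable q m).repr.symm.injective
  rw [LinearEquiv.symm_apply_apply, Module.Basis.repr_symm_apply]
  conv_lhs => rw [← b.linearCombination_repr y]
  rw [Finsupp.linearCombination_apply, Finsupp.linearCombination_apply,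
    Finsupp.sum_mapRange_index (h := fun i (c : K) => c • b.mapPowExpCharPowOfIsSeparable q m i)
      fun _ => zero_smul K _]
  change iterateFrobenius L q m _ = _
  rw [map_finsuppSum]
  simp only [iterateFrobenius_def, smul_pow, Module.Basis.mapPowExpCharPowOfIsSeparable,
    Module.Basis.coe_mk]

/-- Anisotropy of `qlForm p a`, stated over commutative rings so that it applies to polynomial
rings. -/
def QLAnisotropic (p : ℕ) {R : Type*} [CommRing R] {n : ℕ} (a : Fin n → R) : Prop :=
  ∀ x : Fin n → R, ∑ i, a i * x i ^ p = 0 → x = 0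

namespace QLAnisotropic

variable {p n : ℕ}

theorem mvPolynomial {σ R : Type*} [CommRing R] [ExpChar R p] {a : Fin n → R}
    (h : QLAnisotropic p a) : QLAnisotropic p (fun i => C (a i) : Fin n → MvPolynomial σ R) := by
  intro f hf
  funext i
  ext m
  have hcoeff := congrArg (coeff (p • m)) hf
  simp only [coeff_sum, coeff_C_mul, coeff_nsmul_pow_expChar, coeff_zero] at hcoeff
  simpa using congrFun (h _ hcoeff) i

theorem isFractionRing {R K : Type*} [CommRing R] [IsDomain R] [Field K] [Algebra R K]
    [IsFractionRing R K] {a : Fin n → R} (h : QLAnisotropic p a) :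
    QLAnisotropic p (fun i => algebraMap R K (a i)) := by
  intro x hx
  obtain ⟨d, hd⟩ := IsLocalization.exist_integer_multiples_of_finite (nonZeroDivisors R) x
  choose f hf using hd
  have hf0 : f = 0 := h f <| IsFractionRing.injective R K <| by
    simp only [map_sum, map_mul, map_pow, hf, map_zero, smul_pow, Algebra.mul_smul_comm,
      ← Finset.smul_sum, hx, smul_zero]
  funext i
  have hdx := hf i
  rw [hf0, Pi.zero_apply, map_zero, eq_comm, smul_eq_zero] at hdx
  simpa [nonZeroDivisors.coe_ne_zero d] using hdx

theorem map_ringEquiv {R S : Type*} [CommRing R] [CommRing S] (e : R ≃+* S) {a : Fin n → R}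
    (h : QLAnisotropic p a) : QLAnisotropic p (fun i => e (a i)) := by
  intro x hx
  have hx' := h (fun i => e.symm (x i)) (e.injective (by simpa [map_sum] using hx))
  funext i
  simpa using congrFun hx' i

theorem of_algebraicIndependent {ι F E : Type*} [Field F] [Field E] [Algebra F E] [ExpChar F p]
    {x : ι → E} (hx : AlgebraicIndependent F x) {a : Fin n → F} (h : QLAnisotropic p a) :
    QLAnisotropic p (fun i => algebraMap F (IntermediateField.adjoin F (Set.range x)) (a i)) := by
  have h' := (h.mvPolynomial (σ := ι)).isFractionRing (K := FractionRing (MvPolynomial ι F))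
    |>.map_ringEquiv hx.aevalEquivField.toRingEquiv
  convert h' using 2 with i
  rw [AlgEquiv.coe_ringEquiv, ← MvPolynomial.algebraMap_eq, ← IsScalarTower.algebraMap_apply,
    AlgEquiv.commutes]

theorem of_isSeparable {K L : Type*} [Field K] [Field L] [Algebra K L] [Algebra.IsSeparable K L]
    [ExpChar K p] {a : Fin n → K} (h : QLAnisotropic p a) :
    QLAnisotropic p (fun i => algebraMap K L (a i)) := by
  intro x hx
  let b := Module.Basis.ofVectorSpace K L
  have hrepr : ∀ y j, (b.mapPowExpCharPowOfIsSeparable p 1).repr (y ^ p) j = b.repr y j ^ p :=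
    fun y j => by simpa using DFunLike.congr_fun (b.mapPowExpCharPowOfIsSeparable_repr_pow p 1 y) j
  have hcoord : ∀ j, (fun i => b.repr (x i) j) = 0 := fun j => h _ <| by
    have hxj := congrArg (fun y => (b.mapPowExpCharPowOfIsSeparable p 1).repr y j) hx
    simpa [map_sum, ← Algebra.smul_def, hrepr] using hxj
  funext i
  exact b.ext_elem fun j => by simpa using congrFun (hcoord j) i

end QLAnisotropic

/-- An anisotropic quasilinear p-form remains anisotropic over any separably
generated field extension. -/
theorem anisotropic_over_separably_generated
    {F L : Type*} [Field F] [Field L] [Algebra F L]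
    (p n : ℕ) [Fact p.Prime] [CharP F p]
    (hsep : ∃ s : Set L, AlgebraicIndependent F ((↑) : s → L) ∧
        Algebra.IsSeparable (IntermediateField.adjoin F s) L)
    (a : Fin n → F)
    (haniso : ∀ x, qlForm p a x = 0 → x = 0) :
    ∀ x : Fin n → L, qlForm p (fun i => algebraMap F L (a i)) x = 0 → x = 0 := by
  obtain ⟨s, hs, hsep⟩ := hsep
  have hK := QLAnisotropic.of_algebraicIndependent hs (p := p) haniso
  rw [Subtype.range_coe] at hK
  have hL := hK.of_isSeparable (L := L)
  simp only [← IsScalarTower.algebraMap_apply] at hL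
  exact hL
end

section
/- Let φ be a quasilinear p-form over F and let L/F be a finite field extension of degree n such that φ_L is isotropic. Then φ has a subform of dimension at most n (the restriction of φ to a nonzero subspace of dimension ≤ n of V_φ) that becomes isotropic over L. -/
/-- If a quasilinear p-form becomes isotropic over a degree-n extension L/F, then it
has a nonzero subform of dimension at most n becoming isotropic over L. -/
theorem exists_small_subform_isotropic
    {F L : Type*} [Field F] [Field L] [Algebra F L]
    (p n d : ℕ) [Fact p.Prime] [CharP F p]
    [FiniteDimensional F L] (hn : Module.finrank F L = n)
    (a : Fin d → F)
    (hiso : ∃ x : Fin d → L, x ≠ 0 ∧ qlForm p (fun i => algebraMap F L (a i)) x = 0) :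
    ∃ W : Submodule F (Fin d → F), W ≠ ⊥ ∧ Module.finrank F W ≤ n ∧
      ∃ y : Fin d → L, y ≠ 0 ∧
        y ∈ Submodule.span L
          ((fun w : Fin d → F => fun i => algebraMap F L (w i)) '' (W : Set (Fin d → F))) ∧
        qlForm p (fun i => algebraMap F L (a i)) y = 0 := by
  classical
  obtain ⟨x, hx, hxq⟩ := hiso
  let b := Module.finBasis F L
  let w : Fin (Module.finrank F L) → (Fin d → F) := fun j i => b.repr (x i) j
  refine ⟨Submodule.span F (Set.range w), ?_, ?_, x, hx, ?_, hxq⟩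
  · obtain ⟨i, hi⟩ := Function.ne_iff.mp hx
    have hrepr : b.repr (x i) ≠ 0 := by
      intro h
      exact hi (by simpa using congrArg (fun f => b.repr.symm f) h)
    obtain ⟨j, hj⟩ := Finsupp.ne_iff.mp hrepr
    intro hbot
    have hwj : w j ∈ Submodule.span F (Set.range w) := Submodule.subset_span ⟨j, rfl⟩
    rw [hbot, Submodule.mem_bot] at hwj
    exact hj (by simpa using congrFun hwj i)
  · calc Module.finrank F ↥(Submodule.span F (Set.range w))
        ≤ (Set.range w).toFinset.card := finrank_span_le_card _
      _ ≤ Fintype.card (Fin (Module.finrank F L)) := by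
          rw [Set.toFinset_card]; exact Fintype.card_range_le w
      _ = n := by simp [hn]
  · have hxeq : x = ∑ j, b j • (fun i => algebraMap F L (w j i)) := by
      funext i
      have := b.sum_repr (x i)
      rw [← this]
      simp [Finset.sum_apply, Algebra.smul_def, w, mul_comm]
    rw [hxeq]
    refine Submodule.sum_mem _ fun j _ => Submodule.smul_mem _ _ ?_
    exact Submodule.subset_span ⟨w j, Submodule.subset_span ⟨j, rfl⟩, rfl⟩
end

section
/- Let p = 3 and let F be a field of characteristic 3 with a, b ∈ F* such that [F^3(a,b) : F^3] = 9. Then the quasilinear 3-form φ = ⟨1, a + b·a^2, b⟩, i.e. (x,y,z) ↦ x^3 + (a + b a^2) y^3 + b z^3, is anisotropic over F but becomes isotropic over F(a^{1/3}). -/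
set_option synthInstance.maxHeartbeats 1000000
set_option maxHeartbeats 1000000

instance : Fact (Nat.Prime 3) := ⟨by norm_num⟩

/-- If [F^3(a,b) : F^3] = 9, then ⟨1, a + b·a², b⟩ is anisotropic over F but
isotropic over F(a^{1/3}). -/
theorem cubic_form_anisotropic_but_isotropic_over_cube_root
    {F L : Type*} [Field F] [CharP F 3] [Field L] [Algebra F L]
    (a b : F) (ha : a ≠ 0) (hb : b ≠ 0)
    (hdeg : Module.finrank ((frobenius F 3).fieldRange)
      (IntermediateField.adjoin (↥((frobenius F 3).fieldRange)) ({a, b} : Set F)) = 9)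
    (α : L) (hα : α ^ 3 = algebraMap F L a)
    (hgen : IntermediateField.adjoin F ({α} : Set L) = ⊤) :
    (∀ x y z : F, x ^ 3 + (a + b * a ^ 2) * y ^ 3 + b * z ^ 3 = 0 →
        x = 0 ∧ y = 0 ∧ z = 0) ∧
    (∃ x y z : L, ¬ (x = 0 ∧ y = 0 ∧ z = 0) ∧
        x ^ 3 + algebraMap F L (a + b * a ^ 2) * y ^ 3 + algebraMap F L b * z ^ 3 = 0) := by
  set K := (frobenius F 3).fieldRange with hK
  -- every cube lies in every intermediate field of F over K
  have hcube : ∀ (S : IntermediateField (↥K) F) (c : F), c ^ 3 ∈ S := by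
    intro S c
    have h : c ^ 3 ∈ K := ⟨c, frobenius_def 3 c⟩
    exact S.algebraMap_mem ⟨c ^ 3, h⟩
  -- main degree lemma: a and b cannot both lie in a simple extension K(c)
  have main : ∀ c : F, a ∈ IntermediateField.adjoin (↥K) ({c} : Set F) →
      b ∈ IntermediateField.adjoin (↥K) ({c} : Set F) → False := by
    intro c hac hbc
    have hmem : c ^ 3 ∈ K := ⟨c, frobenius_def 3 c⟩
    set p : Polynomial ↥K := Polynomial.X ^ 3 - Polynomial.C ⟨c ^ 3, hmem⟩ with hp
    have hmonic : p.Monic := Polynomial.monic_X_pow_sub_C _ (by norm_num)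
    have haev : Polynomial.aeval c p = 0 := by
      simp [hp, sub_eq_zero]; rfl
    have hint : IsIntegral (↥K) c := ⟨p, hmonic, haev⟩
    have hdvd := minpoly.dvd (↥K) c haev
    have hnd : (minpoly (↥K) c).natDegree ≤ 3 := by
      have := Polynomial.natDegree_le_of_dvd hdvd hmonic.ne_zero
      simpa [hp] using this
    have hfin : FiniteDimensional (↥K)
        (IntermediateField.adjoin (↥K) ({c} : Set F)) :=
      IntermediateField.adjoin.finiteDimensional hint
    have hfr : Module.finrank (↥K) (IntermediateField.adjoin (↥K) ({c} : Set F)) ≤ 3 := by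
      have := IntermediateField.adjoin.finrank hint
      omega
    have hle : IntermediateField.adjoin (↥K) ({a, b} : Set F) ≤
        IntermediateField.adjoin (↥K) ({c} : Set F) := by
      apply IntermediateField.adjoin_le_iff.mpr
      intro x hx
      rcases hx with rfl | hx
      · exact hac
      · rcases hx with rfl; exact hbc
    have hmono : Module.finrank (↥K) (IntermediateField.adjoin (↥K) ({a, b} : Set F)) ≤
        Module.finrank (↥K) (IntermediateField.adjoin (↥K) ({c} : Set F)) := by
      have h' : (IntermediateField.adjoin (↥K) ({a, b} : Set F)).toSubmodule ≤
          (IntermediateField.adjoin (↥K) ({c} : Set F)).toSubmodule := hle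
      have : Module.Finite (↥K)
          ((IntermediateField.adjoin (↥K) ({c} : Set F)).toSubmodule) := hfin
      exact Submodule.finrank_mono h'
    rw [hdeg] at hmono
    omega
  constructor
  · -- anisotropic over F
    intro x y z heq
    -- rewrite equation as x³ + a y³ + b (z³ + a² y³) = 0
    have heq' : x ^ 3 + a * y ^ 3 + b * (z ^ 3 + a ^ 2 * y ^ 3) = 0 := by ring_nf; linear_combination heq
    have hzero : z ^ 3 + a ^ 2 * y ^ 3 = 0 := by
      by_contra hz
      -- then b ∈ K(a)
      set S := IntermediateField.adjoin (↥K) ({a} : Set F) with hS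
      have haS : a ∈ S := IntermediateField.mem_adjoin_simple_self _ a
      have hbS : b ∈ S := by
        have hb' : b = -(x ^ 3 + a * y ^ 3) / (z ^ 3 + a ^ 2 * y ^ 3) :=
          (eq_div_iff hz).mpr (by linear_combination heq')
        rw [hb']
        refine S.div_mem (S.neg_mem (S.add_mem (hcube S x) (S.mul_mem haS (hcube S y))))
          (S.add_mem (hcube S z) (S.mul_mem (by rw [sq]; exact S.mul_mem haS haS) (hcube S y)))
        
      exact main a haS hbS
    have hx3 : x ^ 3 + a * y ^ 3 = 0 := by
      linear_combination heq' - b * hzero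
    have hy : y = 0 := by
      by_contra hy
      -- then a = -(x/y)³ ∈ K, so a ∈ K(b)
      set S := IntermediateField.adjoin (↥K) ({b} : Set F) with hS
      have haS : a ∈ S := by
        have ha' : a = -(x ^ 3) / y ^ 3 :=
          (eq_div_iff (pow_ne_zero 3 hy)).mpr (by linear_combination hx3)
        rw [ha']
        exact S.div_mem (S.neg_mem (hcube S x)) (hcube S y)
      exact main b haS (IntermediateField.mem_adjoin_simple_self _ b)
    subst hy
    have hx : x = 0 := by
      have : x ^ 3 = 0 := by linear_combination hx3
      exact pow_eq_zero_iff (by norm_num) |>.mp this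
    have hz : z = 0 := by
      have : z ^ 3 = 0 := by linear_combination hzero
      exact pow_eq_zero_iff (by norm_num) |>.mp this
    exact ⟨hx, rfl, hz⟩
  · -- isotropic over L
    refine ⟨-α, 1, -(α ^ 2), ?_, ?_⟩
    · intro ⟨_, h1, _⟩
      exact one_ne_zero h1
    · rw [map_add, map_mul, map_pow, ← hα]
      ring
end
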